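/- arXiv:1607.02244 — 5 statements merged into one kernel-verified Lean document; each statement's English description precedes it below -/
import Mathlib

section
/- For every homeomorphism η : [0,∞) → [0,∞), every D ≥ 1, and all reals d_X, d_Y > 0 there exist exponents Λ ≥ λ > 0 and constants C ≥ c > 0 with the following property: whenever (X,d) and (Y,ρ) are nonempty bounded metric spaces that are uniformly perfect with constant D and satisfy diam(X) = d_X and diam(Y) = d_Y, and f : X → Y is an η-quasisymmetric homeomorphism, then c·d(x,y)^Λ ≤ ρ(f(x),f(y)) ≤ C·d(x,y)^λ for all x,y ∈ X. -/
/-!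
Uniform perfectness lets one choose, around any point `x`, points `w` whose distance to `x`
shrinks by a factor between `2` and `2D` per step. If `η(2⁻ᵐ) ≤ 1/2`, quasisymmetry halves
`d(f x, f w)` over every block of `m` steps, during which `d(x, w)` shrinks by at most `(2D)ᵐ`;
comparing `d(x, y)` with these scales gives the upper Hölder bound with exponent
`log 2 / log (2D)ᵐ`. The inverse map is quasisymmetric with control `t ↦ 1 / η⁻¹(1 / t)`, and
inverting its upper bound gives the lower one.
-/

open Set Metric Filter Topology

noncomputable section

/-- `η : [0,∞) → [0,∞)` is a homeomorphism (expressed for a function `η : ℝ → ℝ`). -/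
def IsHomeoOfIci (η : ℝ → ℝ) : Prop :=
  ∃ e : (Set.Ici (0:ℝ)) ≃ₜ (Set.Ici (0:ℝ)), ∀ x : Set.Ici (0:ℝ), (e x : ℝ) = η x

/-- `f` is η-quasisymmetric. -/
def IsQuasisymmetric {X Y : Type*} [MetricSpace X] [MetricSpace Y] (η : ℝ → ℝ)
    (f : X → Y) : Prop :=
  ∀ x y z : X, x ≠ z →
    dist (f x) (f y) / dist (f x) (f z) ≤ η (dist x y / dist x z)

/-- A metric space is uniformly perfect with constant `D ≥ 1` if
`B(x,r) \ B(x,r/D) ≠ ∅` whenever `X \ B(x,r) ≠ ∅` (closed balls). -/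
def UniformlyPerfect (X : Type*) [MetricSpace X] (D : ℝ) : Prop :=
  ∀ (x : X) (r : ℝ), 0 < r → ((Set.univ : Set X) \ closedBall x r).Nonempty →
    (closedBall x r \ closedBall x (r / D)).Nonempty

theorem logb_two_mul_pow_two_mem_Ioc {D : ℝ} (hD : 1 ≤ D) {m : ℕ} (hm : m ≠ 0) :
    Real.logb ((2 * D) ^ m) 2 ∈ Ioc 0 1 := by
  have hB : 2 ≤ (2 * D) ^ m := by
    calc (2 : ℝ) ≤ 2 * D := by linarith
      _ ≤ (2 * D) ^ m := le_self_pow₀ (by linarith) hm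
  have hB1 : 1 < (2 * D) ^ m := by linarith
  refine ⟨Real.logb_pos hB1 one_lt_two, ?_⟩
  rw [Real.logb_le_iff_le_rpow hB1 two_pos, Real.rpow_one]
  exact hB

theorem le_mul_rpow_of_forall_le_two_inv_pow {g M a t B : ℝ} (hM : 0 ≤ M) (ha : 0 < a)
    (ht : 0 < t) (hB : 1 < B) (hg : g ≤ M) (h : ∀ j : ℕ, t ≤ a / B ^ j → g ≤ M * 2⁻¹ ^ j) :
    g ≤ 2 * M / a ^ Real.logb B 2 * t ^ Real.logb B 2 := by
  set α := Real.logb B 2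
  have hα : 0 < α := Real.logb_pos hB one_lt_two
  rw [show 2 * M / a ^ α * t ^ α = 2 * M * (t / a) ^ α by
    rw [Real.div_rpow ht.le ha.le]; ring]
  rcases le_or_gt a t with hat | hta
  · have : 1 ≤ (t / a) ^ α := Real.one_le_rpow ((one_le_div ha).2 hat) hα.le
    nlinarith
  obtain ⟨j, hj, hj'⟩ := exists_nat_pow_near ((one_le_div ht).2 hta.le) hB
  have hBj : (B ^ (j + 1))⁻¹ ≤ t / a := by
    rw [← inv_div]
    exact inv_anti₀ (by positivity) hj'.le
  have htwo : (2⁻¹ : ℝ) ^ (j + 1) ≤ (t / a) ^ α := by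
    calc (2⁻¹ : ℝ) ^ (j + 1) = ((B ^ (j + 1))⁻¹) ^ α := by
          rw [Real.inv_rpow (by positivity), ← Real.rpow_pow_comm (by positivity),
            Real.rpow_logb (by positivity) hB.ne' two_pos, inv_pow]
      _ ≤ (t / a) ^ α := Real.rpow_le_rpow (by positivity) hBj hα.le
  have htj : t ≤ a / B ^ j := by
    rwa [le_div_iff₀ (by positivity), mul_comm, ← le_div_iff₀ ht]
  calc g ≤ M * 2⁻¹ ^ j := h j htj
    _ = 2 * M * 2⁻¹ ^ (j + 1) := by ring
    _ ≤ 2 * M * (t / a) ^ α := by gcongr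

theorem inv_rpow_inv_mul_le_of_le_mul_rpow {a b C α : ℝ} (ha : 0 ≤ a) (hb : 0 ≤ b) (hC : 0 < C)
    (hα : 0 < α) (h : a ≤ C * b ^ α) : (C ^ α⁻¹)⁻¹ * a ^ α⁻¹ ≤ b := by
  rw [inv_mul_le_iff₀ (Real.rpow_pos_of_pos hC _)]
  calc a ^ α⁻¹ ≤ (C * b ^ α) ^ α⁻¹ := Real.rpow_le_rpow ha h (inv_nonneg.2 hα.le)
    _ = C ^ α⁻¹ * b := by
      rw [Real.mul_rpow hC.le (Real.rpow_nonneg hb _), Real.rpow_rpow_inv hb hα.ne']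

theorem IsHomeoOfIci.exists_orderIso {η : ℝ → ℝ} (hη : IsHomeoOfIci η) :
    ∃ e : Ici (0:ℝ) ≃o Ici (0:ℝ), ∀ t, (e t : ℝ) = η t := by
  obtain ⟨h, hh⟩ := hη
  -- `Ici 0` is a conditionally complete linear order only once it is known to be inhabited
  have : Inhabited (Ici (0:ℝ)) := ⟨⊥⟩
  have hmono : StrictMono h := by
    refine (h.continuous.strictMono_of_inj h.injective).resolve_right fun hanti => ?_
    obtain ⟨z, hz⟩ :=
      h.surjective ⟨h ⊥ + 1, mem_Ici.2 (le_add_of_le_of_nonneg (h ⊥).2 zero_le_one)⟩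
    have := hanti.antitone (bot_le : ⊥ ≤ z)
    rw [hz, ← Subtype.coe_le_coe] at this
    norm_num at this
  exact ⟨StrictMono.orderIsoOfSurjective h hmono h.surjective, hh⟩

theorem monotoneOn_of_orderIso_Ici {η : ℝ → ℝ} (e : Ici (0:ℝ) ≃o Ici (0:ℝ))
    (he : ∀ t, (e t : ℝ) = η t) : MonotoneOn η (Ici 0) := fun a ha b hb hab => by
  simpa only [← Subtype.coe_le_coe, he] using
    e.monotone (show (⟨a, ha⟩ : Ici (0:ℝ)) ≤ ⟨b, hb⟩ from hab)

theorem OrderIso.coe_pos_iff (e : Ici (0:ℝ) ≃o Ici (0:ℝ)) (t : Ici (0:ℝ)) :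
    0 < (e t : ℝ) ↔ 0 < (t : ℝ) := by
  change ⊥ < e t ↔ ⊥ < t
  nth_rewrite 1 [← e.map_bot]
  exact e.lt_iff_lt

theorem MonotoneOn.exists_apply_two_inv_pow_le {θ : ℝ → ℝ} (hθ : MonotoneOn θ (Ici 0))
    {δ : ℝ} (hδ : 0 < δ) (hθδ : θ δ ≤ 2⁻¹) : ∃ m : ℕ, m ≠ 0 ∧ θ (2⁻¹ ^ m) ≤ 2⁻¹ := by
  obtain ⟨k, hk⟩ := exists_pow_lt_of_lt_one hδ (by norm_num : (2⁻¹ : ℝ) < 1)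
  refine ⟨k + 1, k.succ_ne_zero, (hθ (mem_Ici.2 (by positivity)) hδ.le ?_).trans hθδ⟩
  calc (2⁻¹ : ℝ) ^ (k + 1) ≤ 2⁻¹ ^ k := pow_le_pow_of_le_one (by norm_num) (by norm_num) k.le_succ
    _ ≤ δ := hk.le

section Metric

variable {X Y : Type*} [MetricSpace X] [MetricSpace Y] {D : ℝ}

theorem exists_lt_dist_of_two_mul_lt_diam {r : ℝ}
    (h : 2 * r < diam (univ : Set X)) (x : X) : ∃ u, r < dist x u := by
  by_contra! hr
  have hr0 : 0 ≤ r := by simpa using hr x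
  refine h.not_ge (diam_le_of_forall_dist_le (by positivity) fun a _ b _ => ?_)
  linarith [dist_triangle_left a b x, hr a, hr b]

theorem UniformlyPerfect.exists_dist_mem_Ioc (hX : UniformlyPerfect X D) {x p : X}
    (hp : x ≠ p) :
    ∃ w, dist x w ∈ Ioc (dist x p / (2 * D)) (dist x p / 2) := by
  have hxp := dist_pos.2 hp
  obtain ⟨w, hw, hw'⟩ := hX x (dist x p / 2) (by positivity)
    ⟨p, mem_univ p, by rw [mem_closedBall, dist_comm]; linarith⟩
  rw [mem_closedBall, dist_comm] at hw hw'
  rw [div_div] at hw'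
  exact ⟨w, lt_of_not_ge hw', hw⟩

theorem UniformlyPerfect.exists_dist_mem_Icc_pow (hX : UniformlyPerfect X D) (hD : 0 < D)
    {x p : X} (hp : x ≠ p) (m : ℕ) :
    ∃ w, dist x w ∈ Icc (dist x p / (2 * D) ^ m) (dist x p / 2 ^ m) := by
  induction m with
  | zero => exact ⟨p, by simp⟩
  | succ m ih =>
    obtain ⟨w, hw_low, hw_up⟩ := ih
    have hxw : x ≠ w := dist_pos.1 (lt_of_lt_of_le (by have := dist_pos.2 hp; positivity) hw_low)
    obtain ⟨w', hw'_low, hw'_up⟩ := hX.exists_dist_mem_Ioc hxw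
    refine ⟨w', ?_, ?_⟩
    · calc dist x p / (2 * D) ^ (m + 1) = dist x p / (2 * D) ^ m / (2 * D) := by
            rw [pow_succ, div_div]
        _ ≤ dist x w / (2 * D) := by gcongr
        _ ≤ dist x w' := hw'_low.le
    · calc dist x w' ≤ dist x w / 2 := hw'_up
        _ ≤ dist x p / 2 ^ m / 2 := by gcongr
        _ = dist x p / 2 ^ (m + 1) := by rw [pow_succ, div_div]

variable {θ : ℝ → ℝ} {f : X → Y}

theorem IsQuasisymmetric.dist_le_mul_of_le (hθ : MonotoneOn θ (Ici 0))
    (hf : IsQuasisymmetric θ f) (hfi : Function.Injective f) {x y z : X} (hxz : x ≠ z) {s : ℝ}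
    (hs : dist x y ≤ s * dist x z) : dist (f x) (f y) ≤ θ s * dist (f x) (f z) := by
  have hratio : dist x y / dist x z ≤ s := (div_le_iff₀ (dist_pos.2 hxz)).2 hs
  have hratio0 : 0 ≤ dist x y / dist x z := by positivity
  rw [← div_le_iff₀ (dist_pos.2 (hfi.ne hxz))]
  exact (hf x y z hxz).trans (hθ hratio0 (hratio0.trans hratio) hratio)

variable {m : ℕ}

theorem IsQuasisymmetric.exists_dist_image_le_half (hθ : MonotoneOn θ (Ici 0))
    (hm : θ (2⁻¹ ^ m) ≤ 2⁻¹) (hf : IsQuasisymmetric θ f) (hfi : Function.Injective f)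
    (hX : UniformlyPerfect X D) (hD : 0 < D) {x p : X} (hp : x ≠ p) :
    ∃ w, dist x p / (2 * D) ^ m ≤ dist x w ∧ dist (f x) (f w) ≤ 2⁻¹ * dist (f x) (f p) := by
  obtain ⟨w, hw_low, hw_up⟩ := hX.exists_dist_mem_Icc_pow hD hp m
  refine ⟨w, hw_low, ?_⟩
  calc dist (f x) (f w) ≤ θ (2⁻¹ ^ m) * dist (f x) (f p) :=
        hf.dist_le_mul_of_le hθ hfi hp (by rwa [inv_pow, inv_mul_eq_div])
    _ ≤ 2⁻¹ * dist (f x) (f p) := by gcongr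

theorem IsQuasisymmetric.exists_dist_image_le_two_inv_pow (hθ : MonotoneOn θ (Ici 0))
    (hm : θ (2⁻¹ ^ m) ≤ 2⁻¹) (hf : IsQuasisymmetric θ f) (hfi : Function.Injective f)
    (hX : UniformlyPerfect X D) (hD : 0 < D) {x u : X} (hu : x ≠ u) (j : ℕ) :
    ∃ w, dist x u / ((2 * D) ^ m) ^ j ≤ dist x w ∧
      dist (f x) (f w) ≤ 2⁻¹ ^ j * dist (f x) (f u) := by
  induction j with
  | zero => exact ⟨u, by simp⟩
  | succ j ih =>
    obtain ⟨w, hw_low, hw_up⟩ := ih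
    have hxw : x ≠ w :=
      dist_pos.1 (lt_of_lt_of_le (by have := dist_pos.2 hu; positivity) hw_low)
    obtain ⟨w', hw'_low, hw'_up⟩ := hf.exists_dist_image_le_half hθ hm hfi hX hD hxw
    refine ⟨w', ?_, ?_⟩
    · calc dist x u / ((2 * D) ^ m) ^ (j + 1) = dist x u / ((2 * D) ^ m) ^ j / (2 * D) ^ m := by
            rw [pow_succ, div_div]
        _ ≤ dist x w / (2 * D) ^ m := by gcongr
        _ ≤ dist x w' := hw'_low
    · calc dist (f x) (f w') ≤ 2⁻¹ * dist (f x) (f w) := hw'_up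
        _ ≤ 2⁻¹ * (2⁻¹ ^ j * dist (f x) (f u)) := by gcongr
        _ = 2⁻¹ ^ (j + 1) * dist (f x) (f u) := by ring

theorem IsQuasisymmetric.dist_le_of_dist_le_div_pow (hθ : MonotoneOn θ (Ici 0))
    (hm : θ (2⁻¹ ^ m) ≤ 2⁻¹) (hf : IsQuasisymmetric θ f) (hfi : Function.Injective f)
    (hX : UniformlyPerfect X D) (hD : 0 < D) (hdX : 0 < diam (univ : Set X))
    (hY : Bornology.IsBounded (univ : Set Y)) {x y : X} {j : ℕ}
    (h : dist x y ≤ diam (univ : Set X) / 4 / ((2 * D) ^ m) ^ j) :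
    dist (f x) (f y) ≤ max (θ 1) 1 * diam (univ : Set Y) * 2⁻¹ ^ j := by
  obtain ⟨u, hu⟩ := exists_lt_dist_of_two_mul_lt_diam (r := diam (univ : Set X) / 4)
    (by linarith) x
  have hxu : 0 < dist x u := lt_trans (by positivity) hu
  obtain ⟨w, hw, hfw⟩ := hf.exists_dist_image_le_two_inv_pow hθ hm hfi hX hD (dist_pos.1 hxu) j
  have hxw : x ≠ w := dist_pos.1 (lt_of_lt_of_le (by positivity) hw)
  have hyw : dist x y ≤ 1 * dist x w := by
    rw [one_mul]
    exact h.trans (le_trans (by gcongr) hw)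
  calc dist (f x) (f y) ≤ θ 1 * dist (f x) (f w) := hf.dist_le_mul_of_le hθ hfi hxw hyw
    _ ≤ max (θ 1) 1 * (2⁻¹ ^ j * dist (f x) (f u)) := by gcongr; exact le_max_left _ _
    _ ≤ max (θ 1) 1 * (2⁻¹ ^ j * diam (univ : Set Y)) := by
        gcongr; exact dist_le_diam_of_mem hY (mem_univ _) (mem_univ _)
    _ = max (θ 1) 1 * diam (univ : Set Y) * 2⁻¹ ^ j := by ring

theorem IsQuasisymmetric.dist_le_mul_dist_rpow (hθ : MonotoneOn θ (Ici 0)) (hm0 : m ≠ 0)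
    (hm : θ (2⁻¹ ^ m) ≤ 2⁻¹) (hf : IsQuasisymmetric θ f) (hfi : Function.Injective f)
    (hX : UniformlyPerfect X D) (hD : 1 ≤ D) (hdX : 0 < diam (univ : Set X))
    (hY : Bornology.IsBounded (univ : Set Y)) (x y : X) :
    dist (f x) (f y) ≤ 2 * (max (θ 1) 1 * diam (univ : Set Y)) /
      (diam (univ : Set X) / 4) ^ Real.logb ((2 * D) ^ m) 2 *
        dist x y ^ Real.logb ((2 * D) ^ m) 2 := by
  have hB : 1 < (2 * D) ^ m := one_lt_pow₀ (by linarith) hm0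
  rcases eq_or_ne x y with rfl | hxy
  · simp [Real.zero_rpow (Real.logb_pos hB one_lt_two).ne']
  refine le_mul_rpow_of_forall_le_two_inv_pow (by positivity) (by positivity)
    (dist_pos.2 hxy) hB ?_ fun j hj => hf.dist_le_of_dist_le_div_pow hθ hm hfi hX
      (by linarith) hdX hY hj
  calc dist (f x) (f y) ≤ diam (univ : Set Y) := dist_le_diam_of_mem hY (mem_univ _) (mem_univ _)
    _ ≤ max (θ 1) 1 * diam (univ : Set Y) := le_mul_of_one_le_left diam_nonneg (le_max_right _ _)

end Metric

/-- The control function `t ↦ 1 / η⁻¹(1 / t)` of the inverse of an `η`-quasisymmetric map,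
where `e` is `η` as an order isomorphism of `[0, ∞)`; it vanishes at `0` because `0⁻¹ = 0`. -/
def symmControl (e : Ici (0:ℝ) ≃o Ici (0:ℝ)) (t : ℝ) : ℝ := (e.symm (projIci 0 t⁻¹) : ℝ)⁻¹

theorem symmControl_nonneg (e : Ici (0:ℝ) ≃o Ici (0:ℝ)) (t : ℝ) : 0 ≤ symmControl e t :=
  inv_nonneg.2 (e.symm _).2

theorem symmControl_zero (e : Ici (0:ℝ) ≃o Ici (0:ℝ)) : symmControl e 0 = 0 := by
  have : projIci (0:ℝ) 0⁻¹ = ⊥ := by ext; simp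
  rw [symmControl, this, e.symm.map_bot, Set.Ici.coe_bot, inv_zero]

theorem symmControl_monotoneOn (e : Ici (0:ℝ) ≃o Ici (0:ℝ)) :
    MonotoneOn (symmControl e) (Ici 0) := by
  intro a ha b _ hab
  rcases (mem_Ici.1 ha).eq_or_lt with rfl | ha0
  · exact (symmControl_zero e).trans_le (symmControl_nonneg e b)
  have hb0 : 0 < b⁻¹ := inv_pos.2 (ha0.trans_le hab)
  have hpos : 0 < (e.symm (projIci 0 b⁻¹) : ℝ) := by
    rwa [e.symm.coe_pos_iff, projIci_of_mem hb0.le]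
  exact inv_anti₀ hpos (e.symm.monotone (monotone_projIci (inv_anti₀ ha0 hab)))

theorem symmControl_inv_apply (e : Ici (0:ℝ) ≃o Ici (0:ℝ)) (t : Ici (0:ℝ)) :
    symmControl e (e t : ℝ)⁻¹ = (t : ℝ)⁻¹ := by
  simp [symmControl, projIci_of_mem (e t).2]

theorem IsQuasisymmetric.symm {X Y : Type*} [MetricSpace X] [MetricSpace Y] {η : ℝ → ℝ}
    (e : Ici (0:ℝ) ≃o Ici (0:ℝ)) (he : ∀ t, (e t : ℝ) = η t) {f : X ≃ Y}
    (hf : IsQuasisymmetric η f) : IsQuasisymmetric (symmControl e) f.symm := by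
  intro u v w huw
  rcases eq_or_ne u v with rfl | huv
  · simp [symmControl_zero]
  have ha := dist_pos.2 (f.symm.injective.ne huv)
  have hb := dist_pos.2 (f.symm.injective.ne huw)
  have hr : 0 < dist u w / dist u v := div_pos (dist_pos.2 huw) (dist_pos.2 huv)
  have hqs := hf (f.symm u) (f.symm w) (f.symm v) (f.symm.injective.ne huv)
  simp only [Equiv.apply_symm_apply] at hqs
  have hle : projIci 0 (dist u w / dist u v) ≤ e ⟨_, (div_pos hb ha).le⟩ := by
    rwa [projIci_of_mem hr.le, ← Subtype.coe_le_coe, he]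
  have hpos : 0 < (e.symm (projIci 0 (dist u w / dist u v)) : ℝ) := by
    rwa [e.symm.coe_pos_iff, projIci_of_mem hr.le]
  have hinv := e.symm.monotone hle
  rw [e.symm_apply_apply, ← Subtype.coe_le_coe] at hinv
  rw [symmControl, inv_div, ← inv_div]
  exact inv_anti₀ hpos hinv

/-- Quasisymmetric homeomorphisms between uniformly perfect bounded metric spaces are
Hölder in both directions, with exponents and constants depending only on `η`, the
diameters of the spaces, and the uniform perfectness constant. -/
theorem statement2 (η : ℝ → ℝ) (hη : IsHomeoOfIci η) (D : ℝ) (hD : 1 ≤ D)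
    (dX dY : ℝ) (hdX : 0 < dX) (hdY : 0 < dY) :
    ∃ Λ lam C c : ℝ, 0 < lam ∧ lam ≤ Λ ∧ 0 < c ∧ c ≤ C ∧
      ∀ (X : Type u) (Y : Type v) [MetricSpace X] [MetricSpace Y],
        Nonempty X → Nonempty Y →
        Bornology.IsBounded (Set.univ : Set X) → Bornology.IsBounded (Set.univ : Set Y) →
        UniformlyPerfect X D → UniformlyPerfect Y D →
        Metric.diam (Set.univ : Set X) = dX → Metric.diam (Set.univ : Set Y) = dY →
        ∀ (f : X ≃ₜ Y), IsQuasisymmetric η f →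
          ∀ x y : X, c * dist x y ^ Λ ≤ dist (f x) (f y) ∧
            dist (f x) (f y) ≤ C * dist x y ^ lam := by
  obtain ⟨e, he⟩ := hη.exists_orderIso
  have hηmono := monotoneOn_of_orderIso_Ici e he
  -- the scales `δ` are `η⁻¹(1/2)` for `η` and `1/η(2)` for `symmControl e`
  obtain ⟨mX, hmX0, hmX⟩ := hηmono.exists_apply_two_inv_pow_le
    ((e.symm.coe_pos_iff ⟨2⁻¹, by norm_num⟩).2 (by norm_num)) (by rw [← he, e.apply_symm_apply])
  obtain ⟨mY, hmY0, hmY⟩ := (symmControl_monotoneOn e).exists_apply_two_inv_pow_le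
    (inv_pos.2 ((e.coe_pos_iff ⟨2, mem_Ici.2 zero_le_two⟩).2 two_pos))
    (symmControl_inv_apply e ⟨2, mem_Ici.2 zero_le_two⟩).le
  set lamX := Real.logb ((2 * D) ^ mX) 2
  set lamY := Real.logb ((2 * D) ^ mY) 2
  obtain ⟨hlamX, hlamX1⟩ := logb_two_mul_pow_two_mem_Ioc hD hmX0
  obtain ⟨hlamY, hlamY1⟩ := logb_two_mul_pow_two_mem_Ioc hD hmY0
  set CX := 2 * (max (η 1) 1 * dY) / (dX / 4) ^ lamX
  set CY := 2 * (max (symmControl e 1) 1 * dX) / (dY / 4) ^ lamY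
  have hCY : 0 < CY := by positivity
  set c := (CY ^ lamY⁻¹)⁻¹
  refine ⟨lamY⁻¹, lamX, max CX c, min c CX, hlamX, hlamX1.trans ((one_le_inv₀ hlamY).2 hlamY1),
    lt_min (by positivity) (by positivity), (min_le_right _ _).trans (le_max_left _ _), ?_⟩
  intro X Y _ _ _ _ hbX hbY hupX hupY hdiamX hdiamY f hf x y
  have hupper := hf.dist_le_mul_dist_rpow hηmono hmX0 hmX f.injective hupX hD
    (hdiamX ▸ hdX) hbY x y
  have hlower := (hf.symm (f := f.toEquiv) e he).dist_le_mul_dist_rpow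
    (symmControl_monotoneOn e) hmY0 hmY f.symm.injective hupY hD (hdiamY ▸ hdY) hbX (f x) (f y)
  rw [hdiamX, hdiamY] at hupper hlower
  simp only [Homeomorph.coe_symm_toEquiv, Homeomorph.symm_apply_apply] at hlower
  exact ⟨(mul_le_mul_of_nonneg_right (min_le_left _ _) (by positivity)).trans
      (inv_rpow_inv_mul_le_of_le_mul_rpow dist_nonneg dist_nonneg hCY hlamY hlower),
    hupper.trans (mul_le_mul_of_nonneg_right (le_max_left _ _) (by positivity))⟩
end
end

section
/- Suppose (X,d) and (Y,ρ) are bounded metric spaces, each uniformly perfect with constant D ≥ 1, and f : X → Y is an η-quasisymmetric homeomorphism. Let κ > 1 and let (x_i) and (y_i) be sequences of points in X such that ρ(f(x_i),f(y_i)) < d(x_i,y_i)^{1+κ} for all i ∈ ℕ and d(x_i,y_i) → 0 as i → ∞. Then for every 0 < ε₀ < 1 there is 0 < ε < ε₀ such that for every m ∈ ℕ there exist three distinct points a, b, c ∈ X satisfying (1) d(a,b) ≤ 1/m, (2) ε·D^{−1}·d(a,c) < d(a,b) ≤ ε·d(a,c), and (3) ρ(f(a),f(b)) < ε^{1+κ/2}·ρ(f(a),f(c)).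 -/
/-!
Take a pair `a = x i`, `b = y i` with `d = d(a, b)` small, and use uniform perfectness to build
points `c₀, c₁, …` with `d(a, c₀)` comparable to a fixed scale `S` and
`d(a, c_{k+1}) / d(a, c_k) ∈ (ε / D, ε]`. If no triple `(a, c_{k+1}, c_k)` satisfied the last
inequality, then `ρ(f a, f c_k) ≥ ε^{(1 + κ/2) k} ρ(f a, f c₀)`. At the first `k` with
`d(a, c_k) ≤ d` one has `ε^k ≥ ε d / S`, while quasisymmetry bounds `ρ(f a, f c_k)` above by a
multiple of `ρ(f a, f b) < d^{1+κ}` and `ρ(f a, f c₀)` below by a multiple of `ρ(f x₀, f y₀)`.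
This gives `d^{1+κ/2} ≲ d^{1+κ}`, which fails for small `d`.
-/

open Set Metric Filter Topology

noncomputable section

theorem IsHomeoOfIci.continuousOn {η : ℝ → ℝ} (hη : IsHomeoOfIci η) :
    ContinuousOn η (Ici 0) := by
  obtain ⟨e, he⟩ := hη
  rw [continuousOn_iff_continuous_domRestrict]
  exact (continuous_subtype_val.comp e.continuous).congr he

theorem IsHomeoOfIci.bddAbove_image_Icc {η : ℝ → ℝ} (hη : IsHomeoOfIci η) (A : ℝ) :
    BddAbove (η '' Icc 0 A) :=
  (isCompact_Icc.image_of_continuousOn (hη.continuousOn.mono Icc_subset_Ici_self)).bddAbove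

theorem Filter.Tendsto.eventually_mul_rpow_le {ι : Type*} {l : Filter ι} {u : ι → ℝ}
    (hu : Tendsto u l (𝓝 0)) (hpos : ∀ i, 0 < u i) {α β : ℝ} (hαβ : α < β) (M : ℝ) {K : ℝ}
    (hK : 0 < K) : ∀ᶠ i in l, M * u i ^ β ≤ K * u i ^ α := by
  have hM : Tendsto (fun i => M * u i ^ (β - α)) l (𝓝 0) := by
    simpa using (hu.rpow_const_nhds_zero (sub_pos.2 hαβ)).const_mul M
  filter_upwards [hM.eventually_le_const hK] with i hi
  calc M * u i ^ β = M * u i ^ (β - α) * u i ^ α := by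
        rw [mul_assoc, ← Real.rpow_add (hpos i), sub_add_cancel]
    _ ≤ K * u i ^ α := by gcongr; exact (Real.rpow_pos_of_pos (hpos i) α).le

section UniformlyPerfect

variable {X : Type*} [MetricSpace X] {D : ℝ}

theorem UniformlyPerfect.exists_dist_mem_Ioc_s3 (hX : UniformlyPerfect X D) {x z : X} {r : ℝ}
    (hr : 0 < r) (hz : r < dist x z) : ∃ w, r / D < dist x w ∧ dist x w ≤ r := by
  obtain ⟨w, hw, hwD⟩ := hX x r hr ⟨z, mem_univ z, by simpa [dist_comm] using hz⟩
  rw [mem_closedBall, dist_comm] at hw hwD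
  exact ⟨w, not_le.1 hwD, hw⟩

theorem UniformlyPerfect.exists_chain (hX : UniformlyPerfect X D) (hD : 0 < D) {a z : X}
    {S ε : ℝ} (hS : 0 < S) (hz : S < dist a z) (hε₀ : 0 < ε) (hε₁ : ε ≤ 1) :
    ∃ c : ℕ → X, S / D < dist a (c 0) ∧ (∀ k, 0 < dist a (c k) ∧ dist a (c k) ≤ S * ε ^ k) ∧
      ∀ k, ε * D⁻¹ * dist a (c k) < dist a (c (k + 1)) ∧ dist a (c (k + 1)) ≤ ε * dist a (c k) := by
  have hstep : ∀ w, 0 < dist a w → dist a w ≤ S →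
      ∃ w', ε * D⁻¹ * dist a w < dist a w' ∧ dist a w' ≤ ε * dist a w := by
    intro w hw hwS
    obtain ⟨w', h₁, h₂⟩ := hX.exists_dist_mem_Ioc_s3 (z := z) (mul_pos hε₀ hw) (by nlinarith)
    exact ⟨w', by rwa [mul_right_comm, ← div_eq_mul_inv], h₂⟩
  choose! F hF using hstep
  obtain ⟨c₀, hc₀, hc₀S⟩ := hX.exists_dist_mem_Ioc_s3 hS hz
  set c : ℕ → X := fun k => F^[k] c₀
  have hc_succ (k : ℕ) : c (k + 1) = F (c k) := Function.iterate_succ_apply' F k c₀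
  have hle_S {k : ℕ} (h : dist a (c k) ≤ S * ε ^ k) : dist a (c k) ≤ S :=
    h.trans (mul_le_of_le_one_right hS.le (pow_le_one₀ hε₀.le hε₁))
  have hc (k : ℕ) : 0 < dist a (c k) ∧ dist a (c k) ≤ S * ε ^ k := by
    induction k with
    | zero => exact ⟨(div_pos hS hD).trans hc₀, by rw [pow_zero, mul_one]; exact hc₀S⟩
    | succ k ih =>
      obtain ⟨h₁, h₂⟩ := hF _ ih.1 (hle_S ih.2)
      rw [hc_succ]
      refine ⟨(mul_pos (mul_pos hε₀ (inv_pos.2 hD)) ih.1).trans h₁, h₂.trans ?_⟩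
      calc ε * dist a (c k) ≤ ε * (S * ε ^ k) := by gcongr; exact ih.2
        _ = S * ε ^ (k + 1) := by ring
  refine ⟨c, hc₀, hc, fun k => ?_⟩
  rw [hc_succ]
  exact hF _ (hc k).1 (hle_S (hc k).2)

end UniformlyPerfect

section Quasisymmetric

variable {X Y : Type*} [MetricSpace X] [MetricSpace Y] {η : ℝ → ℝ} {f : X → Y}

theorem IsQuasisymmetric.dist_le_mul (hf : IsQuasisymmetric η f) (hinj : Function.Injective f)
    {u w : X} (v : X) (huw : u ≠ w) :
    dist (f u) (f v) ≤ η (dist u v / dist u w) * dist (f u) (f w) :=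
  (div_le_iff₀ (dist_pos.2 (hinj.ne huw))).1 (hf u v w huw)

theorem IsQuasisymmetric.dist_le_two_mul (hf : IsQuasisymmetric η f)
    (hinj : Function.Injective f) {a z : X} (haz : a ≠ z) {E : ℝ}
    (hE : ∀ w, η (dist a w / dist a z) ≤ E) (p q : X) :
    dist (f p) (f q) ≤ 2 * E * dist (f a) (f z) := by
  have hle : ∀ w, dist (f a) (f w) ≤ E * dist (f a) (f z) := fun w =>
    (hf.dist_le_mul hinj w haz).trans (mul_le_mul_of_nonneg_right (hE w) dist_nonneg)
  calc dist (f p) (f q) ≤ dist (f a) (f p) + dist (f a) (f q) := dist_triangle_left _ _ _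
    _ ≤ 2 * E * dist (f a) (f z) := by linarith [hle p, hle q]

theorem IsQuasisymmetric.exists_triple_of_chain (hf : IsQuasisymmetric η f)
    (hinj : Function.Injective f) {D ε α β S E : ℝ} (hε₀ : 0 < ε) (hε₁ : ε < 1) (hα : 0 ≤ α)
    (hS : 0 < S) (hE : 0 < E) (hηE : ∀ t ∈ Icc (0 : ℝ) 1, η t ≤ E) {p q a b : X} {c : ℕ → X}
    (hc : ∀ k, 0 < dist a (c k) ∧ dist a (c k) ≤ S * ε ^ k)
    (hstep : ∀ k, ε * D⁻¹ * dist a (c k) < dist a (c (k + 1)) ∧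
      dist a (c (k + 1)) ≤ ε * dist a (c k))
    (hηc : ∀ w, η (dist a w / dist a (c 0)) ≤ E)
    (hab : 0 < dist a b) (hbc : dist a b < dist a (c 0))
    (hfab : dist (f a) (f b) < dist a b ^ β)
    (hsmall : 2 * E ^ 2 * dist a b ^ β ≤ (ε / S) ^ α * dist (f p) (f q) * dist a b ^ α) :
    ∃ a b c : X, a ≠ b ∧ a ≠ c ∧ b ≠ c ∧ dist a b ≤ S ∧
      ε * D⁻¹ * dist a c < dist a b ∧ dist a b ≤ ε * dist a c ∧
      dist (f a) (f b) < ε ^ α * dist (f a) (f c) := by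
  by_contra! hcon
  set d := dist a b
  have hne (k : ℕ) : a ≠ c k := dist_pos.1 (hc k).1
  have hlow (k : ℕ) : ε ^ α * dist (f a) (f (c k)) ≤ dist (f a) (f (c (k + 1))) := by
    have hlt : dist a (c (k + 1)) < dist a (c k) :=
      (hstep k).2.trans_lt (mul_lt_of_lt_one_left (hc k).1 hε₁)
    refine hcon a (c (k + 1)) (c k) (hne _) (hne k) (fun h => hlt.ne (by rw [h])) ?_
      (hstep k).1 (hstep k).2
    exact (hc _).2.trans (mul_le_of_le_one_right hS.le (pow_le_one₀ hε₀.le hε₁.le))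
  obtain ⟨n, hn, hn₁⟩ : ∃ n, ¬dist a (c n) ≤ d ∧ dist a (c (n + 1)) ≤ d := by
    refine Nat.exists_not_and_succ_of_not_zero_of_exists (not_le.2 hbc) ?_
    obtain ⟨k, hk⟩ := exists_pow_lt_of_lt_one (div_pos hab hS) hε₁
    exact ⟨k, (hc k).2.trans (by rw [lt_div_iff₀ hS] at hk; linarith)⟩
  have hupper : dist (f a) (f (c (n + 1))) < E * d ^ β := by
    calc dist (f a) (f (c (n + 1))) ≤ η (dist a (c (n + 1)) / d) * dist (f a) (f b) :=
          hf.dist_le_mul hinj _ (dist_pos.1 hab)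
      _ ≤ E * dist (f a) (f b) := by
          gcongr
          exact hηE _ ⟨by positivity, (div_le_one hab).2 hn₁⟩
      _ < E * d ^ β := by gcongr
  have hratio : ε / S * d ≤ ε ^ (n + 1) := by
    have := (not_le.1 hn).trans_le (hc n).2
    rw [pow_succ, div_mul_eq_mul_div, div_le_iff₀ hS]
    nlinarith
  have hlower : (ε / S) ^ α * dist (f p) (f q) * d ^ α ≤ 2 * E * dist (f a) (f (c (n + 1))) := by
    calc (ε / S) ^ α * dist (f p) (f q) * d ^ α
        = (ε / S * d) ^ α * dist (f p) (f q) := by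
          rw [Real.mul_rpow (by positivity) hab.le]; ring
      _ ≤ (ε ^ α) ^ (n + 1) * (2 * E * dist (f a) (f (c 0))) := by
          rw [Real.rpow_pow_comm hε₀.le]
          gcongr
          exact hf.dist_le_two_mul hinj (hne 0) hηc p q
      _ = 2 * E * ((ε ^ α) ^ (n + 1) * dist (f a) (f (c 0))) := by ring
      _ ≤ 2 * E * dist (f a) (f (c (n + 1))) := by
          gcongr
          exact geom_le (by positivity) _ fun k _ => hlow k
  have : 2 * E * dist (f a) (f (c (n + 1))) < 2 * E ^ 2 * d ^ β := by nlinarith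
  linarith

theorem IsQuasisymmetric.exists_triple
    (hXb : Bornology.IsBounded (univ : Set X)) {D : ℝ} (hD : 0 < D) (hX : UniformlyPerfect X D)
    (hη : ∀ A, BddAbove (η '' Icc 0 A)) (hf : IsQuasisymmetric η f)
    (hinj : Function.Injective f) {α β : ℝ} (hα : 0 ≤ α) (hαβ : α < β) {x y : ℕ → X}
    (hlt : ∀ i, dist (f (x i)) (f (y i)) < dist (x i) (y i) ^ β)
    (hto : Tendsto (fun i => dist (x i) (y i)) atTop (𝓝 0))
    {ε : ℝ} (hε₀ : 0 < ε) (hε₁ : ε < 1) {r : ℝ} (hr : 0 < r) :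
    ∃ a b c : X, a ≠ b ∧ a ≠ c ∧ b ≠ c ∧ dist a b ≤ r ∧
      ε * D⁻¹ * dist a c < dist a b ∧ dist a b ≤ ε * dist a c ∧
      dist (f a) (f b) < ε ^ α * dist (f a) (f c) := by
  have hxy (i : ℕ) : 0 < dist (x i) (y i) := by
    refine dist_nonneg.lt_of_ne fun h => (hlt i).not_ge ?_
    rw [← h, Real.zero_rpow (hα.trans_lt hαβ).ne']
    exact dist_nonneg
  set p := x 0
  set q := y 0
  set S := min r (dist p q / 3)
  have hS : 0 < S := lt_min hr (by linarith [hxy 0])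
  obtain ⟨C, hC⟩ := isBounded_iff.1 hXb
  obtain ⟨E₀, hE₀⟩ := hη (max 1 (C * D / S))
  set E := max E₀ 1
  have hηE (t : ℝ) (ht₀ : 0 ≤ t) (ht : t ≤ max 1 (C * D / S)) : η t ≤ E :=
    (hE₀ ⟨t, ⟨ht₀, ht⟩, rfl⟩).trans (le_max_left _ _)
  have hK : 0 < (ε / S) ^ α * dist (f p) (f q) :=
    mul_pos (by positivity) (dist_pos.2 (hinj.ne (dist_pos.1 (hxy 0))))
  obtain ⟨i, hiS, hi⟩ := ((hto.eventually_lt_const (div_pos hS hD)).and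
    (hto.eventually_mul_rpow_le hxy hαβ (2 * E ^ 2) hK)).exists
  set a := x i
  obtain ⟨z, hz⟩ : ∃ z, S < dist a z := by
    by_contra! h
    linarith [dist_triangle_left p q a, h p, h q, min_le_right r (dist p q / 3)]
  obtain ⟨c, hc₀, hc, hstep⟩ := hX.exists_chain hD hS hz hε₀ hε₁.le
  have hηc (w : X) : η (dist a w / dist a (c 0)) ≤ E := by
    refine hηE _ (by positivity) (le_max_of_le_right ?_)
    calc dist a w / dist a (c 0) ≤ C / (S / D) :=
          div_le_div₀ (dist_nonneg.trans (hC (mem_univ a) (mem_univ w)))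
            (hC (mem_univ _) (mem_univ _)) (div_pos hS hD) hc₀.le
      _ = C * D / S := div_div_eq_mul_div C S D
  obtain ⟨a', b', c', hab, hac, hbc, hS', h⟩ := hf.exists_triple_of_chain hinj hε₀ hε₁ hα hS
    (by positivity) (fun t ht => hηE t ht.1 (ht.2.trans (le_max_left _ _))) hc hstep hηc (hxy i)
    (hiS.trans hc₀) (hlt i) hi
  exact ⟨a', b', c', hab, hac, hbc, hS'.trans (min_le_left _ _), h⟩

end Quasisymmetric

theorem statement3_general {X Y : Type*} [MetricSpace X] [MetricSpace Y]
    (hXb : Bornology.IsBounded (Set.univ : Set X))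
    (D : ℝ) (hD : 1 ≤ D) (hXup : UniformlyPerfect X D)
    (η : ℝ → ℝ) (hη : IsHomeoOfIci η) (f : X ≃ₜ Y) (hf : IsQuasisymmetric η f)
    (κ : ℝ) (hκ : 1 < κ) (x y : ℕ → X)
    (hlt : ∀ i : ℕ, dist (f (x i)) (f (y i)) < dist (x i) (y i) ^ (1 + κ))
    (hto : Tendsto (fun i => dist (x i) (y i)) atTop (𝓝 0)) :
    ∀ ε₀ : ℝ, 0 < ε₀ → ε₀ < 1 → ∃ ε : ℝ, 0 < ε ∧ ε < ε₀ ∧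
      ∀ m : ℕ, 0 < m → ∃ a b c : X, a ≠ b ∧ a ≠ c ∧ b ≠ c ∧
        dist a b ≤ 1 / (m : ℝ) ∧
        ε * D⁻¹ * dist a c < dist a b ∧ dist a b ≤ ε * dist a c ∧
        dist (f a) (f b) < ε ^ (1 + κ / 2) * dist (f a) (f c) := by
  intro ε₀ hε₀ hε₀₁
  refine ⟨ε₀ / 2, by positivity, by linarith, fun m hm => ?_⟩
  exact hf.exists_triple hXb (by linarith) hXup hη.bddAbove_image_Icc f.injective
    (by linarith) (by linarith) hlt hto (by positivity) (by linarith) (by positivity)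

/-- Lemma 3.3 of the paper: from a sequence of pairs on which an `η`-quasisymmetric map
exhibits a genuine Hölder behaviour one finds, at all small scales, triplets of points
with comparable distances on which the Hölder behaviour persists. -/
theorem statement3 {X Y : Type*} [MetricSpace X] [MetricSpace Y]
    (hXb : Bornology.IsBounded (Set.univ : Set X))
    (hYb : Bornology.IsBounded (Set.univ : Set Y))
    (D : ℝ) (hD : 1 ≤ D) (hXup : UniformlyPerfect X D) (hYup : UniformlyPerfect Y D)
    (η : ℝ → ℝ) (hη : IsHomeoOfIci η) (f : X ≃ₜ Y) (hf : IsQuasisymmetric η f)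
    (κ : ℝ) (hκ : 1 < κ) (x y : ℕ → X)
    (hlt : ∀ i : ℕ, dist (f (x i)) (f (y i)) < dist (x i) (y i) ^ (1 + κ))
    (hto : Tendsto (fun i => dist (x i) (y i)) atTop (𝓝 0)) :
    ∀ ε₀ : ℝ, 0 < ε₀ → ε₀ < 1 → ∃ ε : ℝ, 0 < ε ∧ ε < ε₀ ∧
      ∀ m : ℕ, 0 < m → ∃ a b c : X, a ≠ b ∧ a ≠ c ∧ b ≠ c ∧
        dist a b ≤ 1 / (m : ℝ) ∧
        ε * D⁻¹ * dist a c < dist a b ∧ dist a b ≤ ε * dist a c ∧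
        dist (f a) (f b) < ε ^ (1 + κ / 2) * dist (f a) (f c) :=
  statement3_general hXb D hD hXup η hη f hf κ hκ x y hlt hto
end
end

section
/- If (X,d) and (Y,ρ) are separable metric spaces and f : X → Y is quasi-Lipschitz, then the Hausdorff dimension of f(X) equals the Hausdorff dimension of X. -/
open Set Metric Filter Topology
open scoped ENNReal NNReal

noncomputable section

/-- `f` is quasi-Lipschitz: `log ρ(f x, f y) / log d(x,y) → 1` uniformly as
`d(x,y) → 0`; equivalently, for every `ε > 0` there is `δ > 0` such that
`d(x,y)^{1+ε} ≤ ρ(f x, f y) ≤ d(x,y)^{1-ε}` whenever `0 < d(x,y) < δ`. -/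
def QuasiLipschitz {X Y : Type*} [MetricSpace X] [MetricSpace Y] (f : X → Y) : Prop :=
  ∀ ε : ℝ, 0 < ε → ∃ δ : ℝ, 0 < δ ∧ ∀ x y : X, 0 < dist x y → dist x y < δ →
    dist x y ^ (1 + ε) ≤ dist (f x) (f y) ∧ dist (f x) (f y) ≤ dist x y ^ (1 - ε)

/-- Helper: if `(1-ε) * A ≤ B` for all small `ε`, then `A ≤ B`. -/
lemma aux_le {A B : ℝ≥0∞} (h : ∀ ε : ℝ, 0 < ε → ε < 1 → ENNReal.ofReal (1 - ε) * A ≤ B) :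
    A ≤ B := by
  apply ENNReal.le_of_forall_lt_one_mul_le
  intro a ha
  rcases eq_or_ne a 0 with rfl | ha0
  · simp
  · have hane : a ≠ ∞ := ha.ne_top
    have h1 : 0 < a.toReal := ENNReal.toReal_pos ha0 hane
    have h2 : a.toReal < 1 := by
      rw [← ENNReal.toReal_one]
      exact ENNReal.toReal_strict_mono ENNReal.one_ne_top ha
    have := h (1 - a.toReal) (by linarith) (by linarith)
    simpa [ENNReal.ofReal_toReal hane] using this

lemma holder_edist_of_dist_le {X Y : Type*} [MetricSpace X] [MetricSpace Y]
    {f : X → Y} {x y : X} {p : ℝ} (hp : 0 ≤ p)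
    (h : dist (f x) (f y) ≤ dist x y ^ p) :
    edist (f x) (f y) ≤ (1 : ℝ≥0∞) * edist x y ^ p := by
  rw [one_mul, edist_dist, edist_dist, ENNReal.ofReal_rpow_of_nonneg dist_nonneg hp]
  exact ENNReal.ofReal_le_ofReal h

lemma ql_upper {X Y : Type*} [MetricSpace X] [MetricSpace Y]
    [SecondCountableTopology X] (f : X → Y) (hf : QuasiLipschitz f) :
    dimH (Set.range f) ≤ dimH (Set.univ : Set X) := by
  apply aux_le
  intro ε hε hε1
  obtain ⟨δ, hδ, H⟩ := hf ε hε
  set r : ℝ≥0 := (1 - ε).toNNReal with hr_def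
  have hr : 0 < r := Real.toNNReal_pos.2 (by linarith)
  have hrc : (r : ℝ) = 1 - ε := Real.coe_toNNReal _ (by linarith)
  have key : dimH (Set.range f) ≤ dimH (Set.univ : Set X) / r := by
    apply dimH_range_le_of_locally_holder_on hr
    intro x
    refine ⟨1, ball x (δ / 2), ball_mem_nhds x (half_pos hδ), ?_⟩
    intro y hy z hz
    rcases eq_or_ne y z with rfl | hyz
    · simp [ENNReal.zero_rpow_of_pos (by exact_mod_cast hr : (0:ℝ) < (r:ℝ))]
    · have hd : 0 < dist y z := dist_pos.2 hyz
      have hdδ : dist y z < δ := by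
        have := dist_triangle y x z
        rw [mem_ball] at hy hz
        rw [dist_comm] at hz
        linarith
      have := (H y z hd hdδ).2
      rw [hrc]
      exact holder_edist_of_dist_le (by linarith) this
  rw [ENNReal.le_div_iff_mul_le (Or.inl (by exact_mod_cast hr.ne'))
    (Or.inl ENNReal.coe_ne_top)] at key
  calc ENNReal.ofReal (1 - ε) * dimH (Set.range f)
      = dimH (Set.range f) * r := by
        rw [← hrc, ENNReal.ofReal_coe_nnreal, mul_comm]
    _ ≤ _ := key

lemma ql_lower {X Y : Type*} [MetricSpace X] [MetricSpace Y] [Nonempty X]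
    [SecondCountableTopology X] (f : X → Y) (hf : QuasiLipschitz f) :
    dimH (Set.univ : Set X) ≤ dimH (Set.range f) := by
  apply aux_le
  intro ε hε hε1
  obtain ⟨δ, hδ, H⟩ := hf ε hε
  set r : ℝ≥0 := ((1 + ε)⁻¹).toNNReal with hr_def
  have h1ε : (0:ℝ) < 1 + ε := by linarith
  have hr : 0 < r := Real.toNNReal_pos.2 (by positivity)
  have hrc : (r : ℝ) = (1 + ε)⁻¹ := Real.coe_toNNReal _ (by positivity)
  -- local estimate on each small ball
  have local_est : ∀ x : X, dimH (ball x (δ / 2)) ≤ dimH (Set.range f) / r := by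
    intro x
    set t := ball x (δ / 2) with ht_def
    have hdist : ∀ y ∈ t, ∀ z ∈ t, dist y z < δ := by
      intro y hy z hz
      have := dist_triangle y x z
      rw [ht_def, mem_ball] at hy hz
      rw [dist_comm] at hz
      linarith
    have hinj : InjOn f t := by
      intro y hy z hz hfyz
      by_contra hyz
      have hd : 0 < dist y z := dist_pos.2 hyz
      have := (H y z hd (hdist y hy z hz)).1
      rw [hfyz, dist_self] at this
      have : (0:ℝ) < dist y z ^ (1 + ε) := Real.rpow_pos_of_pos hd _
      linarith
    set g := Function.invFunOn f t with hg_def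
    have hholder : HolderOnWith 1 r g (f '' t) := by
      rintro u ⟨y, hy, rfl⟩ v ⟨z, hz, rfl⟩
      have hgy : g (f y) = y := hinj.leftInvOn_invFunOn hy
      have hgz : g (f z) = z := hinj.leftInvOn_invFunOn hz
      rw [hrc]
      rcases eq_or_ne y z with rfl | hyz
      · simp [ENNReal.zero_rpow_of_pos (by positivity : (0:ℝ) < (1+ε)⁻¹)]
      · have hd : 0 < dist y z := dist_pos.2 hyz
        have hle := (H y z hd (hdist y hy z hz)).1
        have hkey : dist y z ≤ dist (f y) (f z) ^ (1 + ε)⁻¹ := by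
          calc dist y z = (dist y z ^ (1 + ε)) ^ (1 + ε)⁻¹ := by
                rw [← Real.rpow_mul dist_nonneg, mul_inv_cancel₀ h1ε.ne', Real.rpow_one]
            _ ≤ dist (f y) (f z) ^ (1 + ε)⁻¹ :=
                Real.rpow_le_rpow (Real.rpow_nonneg dist_nonneg _) hle (by positivity)
        refine holder_edist_of_dist_le (by positivity) ?_
        rw [hgy, hgz]
        exact hkey
    have himg : g '' (f '' t) = t := hinj.invFunOn_image Subset.rfl
    calc dimH t = dimH (g '' (f '' t)) := by rw [himg]
      _ ≤ dimH (f '' t) / r := hholder.dimH_image_le hr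
      _ ≤ dimH (Set.range f) / r :=
          ENNReal.div_le_div_right (dimH_mono (image_subset_range f t)) _
  obtain ⟨S, hSc, hSU⟩ := countable_cover_nhds (fun x : X => ball_mem_nhds x (half_pos hδ))
  have hdim : dimH (Set.univ : Set X) ≤ dimH (Set.range f) / r := by
    rw [← hSU, dimH_bUnion hSc]
    exact iSup₂_le fun x _ => local_est x
  rw [ENNReal.le_div_iff_mul_le (Or.inl (by exact_mod_cast hr.ne'))
    (Or.inl ENNReal.coe_ne_top)] at hdim
  have hle : ENNReal.ofReal (1 - ε) ≤ (r : ℝ≥0∞) := by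
    have h2 : (1 - ε) ≤ (1 + ε)⁻¹ := by
      rw [inv_eq_one_div, le_div_iff₀ h1ε]; nlinarith
    calc ENNReal.ofReal (1 - ε) ≤ ENNReal.ofReal ((1 + ε)⁻¹) := ENNReal.ofReal_le_ofReal h2
      _ = (r : ℝ≥0∞) := rfl
  calc ENNReal.ofReal (1 - ε) * dimH (Set.univ : Set X)
      ≤ (r : ℝ≥0∞) * dimH (Set.univ : Set X) := mul_le_mul_left hle _
    _ = dimH (Set.univ : Set X) * r := mul_comm _ _
    _ ≤ _ := hdim

/-- Quasi-Lipschitz maps between separable metric spaces preserve Hausdorff dimension. -/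
theorem statement4 {X Y : Type*} [MetricSpace X] [MetricSpace Y]
    [TopologicalSpace.SeparableSpace X] [TopologicalSpace.SeparableSpace Y]
    (f : X → Y) (hf : QuasiLipschitz f) :
    dimH (Set.range f) = dimH (Set.univ : Set X) := by
  haveI : SecondCountableTopology X := UniformSpace.secondCountable_of_separable X
  cases isEmpty_or_nonempty X with
  | inl h =>
    rw [Set.range_eq_empty f, Set.univ_eq_empty_iff.2 h, dimH_empty, dimH_empty]
  | inr h =>
    exact le_antisymm (ql_upper f hf) (ql_lower f hf)
end
end

section
/- Let E be a horizontal self-affine carpet with the associated symbolic notation. Then for every 𝚒 ∈ Σ and 0 < t < 1: (1) n_*(t) ≤ n(𝚒,t) ≤ n^*(t); (2) α̲·t ≤ α₂(𝚒|_t) ≤ δ^{−1}·t. -/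
open Set Metric Filter Topology

noncomputable section

/-- The Euclidean plane ℝ². -/
abbrev E2 := EuclideanSpace ℝ (Fin 2)

/-- The vertical line {a} × ℝ in ℝ². -/
def vline (a : ℝ) : Set E2 := {x | x 0 = a}

/-- A horizontal self-affine carpet: an IFS of invertible diagonal affine maps on ℝ²
satisfying (H1), together with its attractor `E` of diameter 1, satisfying the strong
separation condition and the vertical line condition (H2). -/
structure HorizontalCarpet where
  N : ℕ
  hN : 2 ≤ N
  a1 : Fin N → ℝ
  a2 : Fin N → ℝ
  b1 : Fin N → ℝ
  b2 : Fin N → ℝ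
  φ : Fin N → E2 → E2
  hφ : ∀ i x, φ i x = ![a1 i * x 0 + b1 i, a2 i * x 1 + b2 i]
  hH1 : ∀ i, 0 < a2 i ∧ a2 i < a1 i ∧ a1 i < 1
  E : Set E2
  hne : E.Nonempty
  hcomp : IsCompact E
  hinv : E = ⋃ i, φ i '' E
  hdiam : Metric.diam E = 1
  hssc : ∀ i j, i ≠ j → Disjoint (φ i '' E) (φ j '' E)
  hH2 : ∀ a : ℝ, (vline a ∩ convexHull ℝ E).Nonempty →
    ∃ i j : Fin N, i ≠ j ∧ (vline a ∩ φ i '' (convexHull ℝ E)).Nonempty ∧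
      (vline a ∩ φ j '' (convexHull ℝ E)).Nonempty

/-- The composition `φ_{i₁} ∘ ⋯ ∘ φ_{iₙ}` associated to a finite word. -/
def wordMap (c : HorizontalCarpet) : List (Fin c.N) → E2 → E2
  | [] => id
  | i :: l => c.φ i ∘ wordMap c l

/-- The first `n` entries `𝚒|_n` of an infinite word `𝚒 ∈ Σ`, as a list. -/
def wordPre (c : HorizontalCarpet) (i : ℕ → Fin c.N) (n : ℕ) : List (Fin c.N) :=
  (List.range n).map i

/-- `α₂(𝚒)`, the product of the vertical contraction ratios along a word. -/
def prodA2 (c : HorizontalCarpet) (l : List (Fin c.N)) : ℝ := (l.map c.a2).prod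

/-- `ᾱ = max_i α₁(i)`. -/
def alphaBar (c : HorizontalCarpet) : ℝ := sSup (Set.range c.a1)

/-- `α̲ = min_i α₂(i)`. -/
def alphaLow (c : HorizontalCarpet) : ℝ := sInf (Set.range c.a2)

/-- `δ = min_{i ≠ j} dist(φ_i(E), φ_j(E))`. -/
def sscGap (c : HorizontalCarpet) : ℝ :=
  sInf {d : ℝ | ∃ i j : Fin c.N, i ≠ j ∧
    ∃ x ∈ c.φ i '' c.E, ∃ y ∈ c.φ j '' c.E, d = dist x y}

/-- `n(𝚒,t)`: the largest `n` such that `B(π(𝚒),t)` meets no level-`n` cylinder other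
than `E_{𝚒|_n}`; here `p = π(𝚒)`. -/
def nSep (c : HorizontalCarpet) (i : ℕ → Fin c.N) (p : E2) (t : ℝ) : ℕ :=
  sSup {n : ℕ | ∀ l : List (Fin c.N), l.length = n → l ≠ wordPre c i n →
    wordMap c l '' c.E ∩ closedBall p t = ∅}

/-- `n^*(t) = min{n : ᾱ^n < t}`. -/
def nUp (c : HorizontalCarpet) (t : ℝ) : ℕ := sInf {n : ℕ | alphaBar c ^ n < t}

/-- `n_*(t) = max{n : α̲^n δ > t}`. -/
def nLow (c : HorizontalCarpet) (t : ℝ) : ℕ :=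
  sSup {n : ℕ | t < alphaLow c ^ n * sscGap c}

/-!
Write `n = n(𝚒,t)` and `p = π(𝚒)`. Every `φ_𝚔` scales distances by a factor of at least `α₂(𝚔)`, so
cylinders of equal length whose words first differ after a common prefix `𝚔` are at least
`α₂(𝚔) δ` apart. Since level `n + 1` is not separated, this gives `α₂(𝚒|_n) δ ≤ t`, hence the
upper bound on `α₂(𝚒|_t)` and `n_*(t) ≤ n`. A sibling cylinder `E_{𝚒|_k j}` lies within `ᾱ^k`
of `p`, so separation at level `k + 1` forces `t < ᾱ^k`; this gives `n ≤ n^*(t)`.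
For the lower bound, iterating (H2) along the vertical line through `p` yields points of a
sibling cylinder `E_{𝚒|_{n-1} j}`, `j ≠ i_n`, arbitrarily close to points of `φ_{𝚒|_{n-1}}(X)`
on that line, and those lie within `α₂(𝚒|_{n-1})` of `p` because `φ_{𝚒|_{n-1}}` contracts
vertical segments by exactly this factor. Separation at level `n` thus gives
`t ≤ α₂(𝚒|_{n-1}) ≤ α₂(𝚒|_n) / α̲` when `n ≥ 1`; for `n = 0` the bound is just `t < 1`.
-/

theorem EuclideanSpace.mul_dist_le_mul_dist {ι : Type*} [Fintype ι]
    {x y u v : EuclideanSpace ℝ ι} {a b : ℝ} (ha : 0 ≤ a) (hb : 0 ≤ b)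
    (h : ∀ j, a * dist (x j) (y j) ≤ b * dist (u j) (v j)) :
    a * dist x y ≤ b * dist u v := by
  have hsqrt : ∀ {r : ℝ}, 0 ≤ r → ∀ x y : EuclideanSpace ℝ ι,
      r * dist x y = √(∑ j, (r * dist (x j) (y j)) ^ 2) := by
    intro r hr x y
    simp_rw [EuclideanSpace.dist_eq, mul_pow, ← Finset.mul_sum, Real.sqrt_mul (sq_nonneg r),
      Real.sqrt_sq hr]
  rw [hsqrt ha, hsqrt hb]
  exact Real.sqrt_le_sqrt <| Finset.sum_le_sum fun j _ =>
    pow_le_pow_left₀ (mul_nonneg ha dist_nonneg) (h j) 2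

namespace HorizontalCarpet

variable {c : HorizontalCarpet}

def prodA1 (c : HorizontalCarpet) (l : List (Fin c.N)) : ℝ := (l.map c.a1).prod

lemma a2_pos (i : Fin c.N) : 0 < c.a2 i := (c.hH1 i).1

lemma a2_lt_a1 (i : Fin c.N) : c.a2 i < c.a1 i := (c.hH1 i).2.1

lemma a1_lt_one (i : Fin c.N) : c.a1 i < 1 := (c.hH1 i).2.2

lemma a1_pos (i : Fin c.N) : 0 < c.a1 i := (a2_pos i).trans (a2_lt_a1 i)

lemma a2_lt_one (i : Fin c.N) : c.a2 i < 1 := (a2_lt_a1 i).trans (a1_lt_one i)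

instance nontrivial_fin (c : HorizontalCarpet) : Nontrivial (Fin c.N) :=
  Fin.nontrivial_iff_two_le.mpr c.hN

lemma alphaBar_mem_range : alphaBar c ∈ range c.a1 :=
  (range_nonempty _).csSup_mem (finite_range _)

lemma alphaLow_mem_range : alphaLow c ∈ range c.a2 :=
  (range_nonempty _).csInf_mem (finite_range _)

lemma alphaBar_pos : 0 < alphaBar c := by
  obtain ⟨i, hi⟩ := alphaBar_mem_range (c := c); exact hi ▸ a1_pos i

lemma alphaBar_lt_one : alphaBar c < 1 := by
  obtain ⟨i, hi⟩ := alphaBar_mem_range (c := c); exact hi ▸ a1_lt_one i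

lemma alphaLow_pos : 0 < alphaLow c := by
  obtain ⟨i, hi⟩ := alphaLow_mem_range (c := c); exact hi ▸ a2_pos i

lemma alphaLow_lt_one : alphaLow c < 1 := by
  obtain ⟨i, hi⟩ := alphaLow_mem_range (c := c); exact hi ▸ a2_lt_one i

lemma a1_le_alphaBar (i : Fin c.N) : c.a1 i ≤ alphaBar c :=
  le_csSup (finite_range _).bddAbove ⟨i, rfl⟩

lemma alphaLow_le_a2 (i : Fin c.N) : alphaLow c ≤ c.a2 i :=
  csInf_le (finite_range _).bddBelow ⟨i, rfl⟩

@[simp] lemma prodA1_nil : prodA1 c [] = 1 := rfl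

@[simp] lemma prodA2_nil : prodA2 c [] = 1 := rfl

@[simp] lemma prodA1_cons (i : Fin c.N) (l : List (Fin c.N)) :
    prodA1 c (i :: l) = c.a1 i * prodA1 c l := by
  simp [prodA1]

@[simp] lemma prodA2_cons (i : Fin c.N) (l : List (Fin c.N)) :
    prodA2 c (i :: l) = c.a2 i * prodA2 c l := by
  simp [prodA2]

@[simp] lemma prodA2_append (l m : List (Fin c.N)) :
    prodA2 c (l ++ m) = prodA2 c l * prodA2 c m := by
  simp [prodA2]

lemma prodA1_pos (l : List (Fin c.N)) : 0 < prodA1 c l :=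
  List.prod_pos fun _ h => by obtain ⟨i, -, rfl⟩ := List.mem_map.1 h; exact a1_pos i

lemma prodA2_pos (l : List (Fin c.N)) : 0 < prodA2 c l :=
  List.prod_pos fun _ h => by obtain ⟨i, -, rfl⟩ := List.mem_map.1 h; exact a2_pos i

lemma prodA2_le_prodA1 (l : List (Fin c.N)) : prodA2 c l ≤ prodA1 c l := by
  induction l with
  | nil => simp
  | cons i l ih =>
    simpa using mul_le_mul (a2_lt_a1 i).le ih (prodA2_pos l).le (a1_pos i).le

lemma prodA1_le_alphaBar_pow (l : List (Fin c.N)) : prodA1 c l ≤ alphaBar c ^ l.length := by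
  induction l with
  | nil => simp
  | cons i l ih =>
    rw [prodA1_cons, List.length_cons, pow_succ']
    exact mul_le_mul (a1_le_alphaBar i) ih (prodA1_pos l).le alphaBar_pos.le

lemma alphaLow_pow_le_prodA2 (l : List (Fin c.N)) : alphaLow c ^ l.length ≤ prodA2 c l := by
  induction l with
  | nil => simp
  | cons i l ih =>
    rw [prodA2_cons, List.length_cons, pow_succ']
    exact mul_le_mul (alphaLow_le_a2 i) ih (pow_nonneg alphaLow_pos.le _) (a2_pos i).le

@[simp] lemma wordMap_nil : wordMap c [] = id := rfl

@[simp] lemma wordMap_cons_apply (i : Fin c.N) (l : List (Fin c.N)) (x : E2) :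
    wordMap c (i :: l) x = c.φ i (wordMap c l x) := rfl

lemma wordMap_append (l m : List (Fin c.N)) :
    wordMap c (l ++ m) = wordMap c l ∘ wordMap c m := by
  induction l with
  | nil => rfl
  | cons i l ih => rw [List.cons_append, wordMap, ih, wordMap, Function.comp_assoc]

lemma exists_wordMap_apply (l : List (Fin c.N)) : ∃ B D : ℝ, ∀ x : E2,
    wordMap c l x 0 = prodA1 c l * x 0 + B ∧ wordMap c l x 1 = prodA2 c l * x 1 + D := by
  induction l with
  | nil => exact ⟨0, 0, fun x => by simp [wordMap]⟩
  | cons i l ih =>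
    obtain ⟨B, D, h⟩ := ih
    refine ⟨c.a1 i * B + c.b1 i, c.a2 i * D + c.b2 i, fun x => ⟨?_, ?_⟩⟩
    · simp only [wordMap_cons_apply, c.hφ, Matrix.cons_val_zero, (h x).1, prodA1_cons]
      ring
    · simp only [wordMap_cons_apply, c.hφ, Matrix.cons_val_one, Matrix.cons_val_fin_one, (h x).2,
        prodA2_cons]
      ring

lemma dist_wordMap_apply (l : List (Fin c.N)) (x y : E2) :
    dist (wordMap c l x 0) (wordMap c l y 0) = prodA1 c l * dist (x 0) (y 0) ∧
      dist (wordMap c l x 1) (wordMap c l y 1) = prodA2 c l * dist (x 1) (y 1) := by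
  obtain ⟨B, D, h⟩ := exists_wordMap_apply (c := c) l
  simp only [(h x).1, (h x).2, (h y).1, (h y).2, Real.dist_eq, ← mul_sub, add_sub_add_right_eq_sub,
    abs_mul, abs_of_pos (prodA1_pos l), abs_of_pos (prodA2_pos l), and_self]

lemma dist_wordMap_le (l : List (Fin c.N)) (x y : E2) :
    dist (wordMap c l x) (wordMap c l y) ≤ prodA1 c l * dist x y := by
  obtain ⟨h0, h1⟩ := dist_wordMap_apply l x y
  simpa using EuclideanSpace.mul_dist_le_mul_dist zero_le_one (prodA1_pos l).le <|
    Fin.forall_fin_two.2 ⟨by rw [one_mul, h0], by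
      rw [one_mul, h1]; gcongr; exact prodA2_le_prodA1 l⟩

lemma mul_dist_le_dist_wordMap (l : List (Fin c.N)) (x y : E2) :
    prodA2 c l * dist x y ≤ dist (wordMap c l x) (wordMap c l y) := by
  obtain ⟨h0, h1⟩ := dist_wordMap_apply l x y
  simpa using EuclideanSpace.mul_dist_le_mul_dist (prodA2_pos l).le zero_le_one <|
    Fin.forall_fin_two.2 ⟨by
      rw [one_mul, h0]; gcongr; exact prodA2_le_prodA1 l, h1.ge.trans_eq (one_mul _).symm⟩

lemma dist_wordMap_le_of_apply_zero_eq (l : List (Fin c.N)) {x y : E2}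
    (h : wordMap c l x 0 = wordMap c l y 0) :
    dist (wordMap c l x) (wordMap c l y) ≤ prodA2 c l * dist x y := by
  simpa using EuclideanSpace.mul_dist_le_mul_dist zero_le_one (prodA2_pos l).le <|
    Fin.forall_fin_two.2 ⟨by simp [h, mul_nonneg (prodA2_pos l).le dist_nonneg],
      by rw [one_mul, (dist_wordMap_apply l x y).2]⟩

lemma wordMap_smul_add_smul (l : List (Fin c.N)) {a b : ℝ} (hab : a + b = 1) (x y : E2) :
    wordMap c l (a • x + b • y) = a • wordMap c l x + b • wordMap c l y := by
  obtain ⟨B, D, h⟩ := exists_wordMap_apply (c := c) l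
  refine PiLp.ext (Fin.forall_fin_two.2 ⟨?_, ?_⟩)
  · simp only [(h _).1, PiLp.add_apply, PiLp.smul_apply, smul_eq_mul]
    linear_combination (-B) * hab
  · simp only [(h _).2, PiLp.add_apply, PiLp.smul_apply, smul_eq_mul]
    linear_combination (-D) * hab

lemma wordMap_image_subset (l : List (Fin c.N)) : wordMap c l '' c.E ⊆ c.E := by
  induction l with
  | nil => simp [wordMap]
  | cons i l ih =>
    rw [wordMap, image_comp]
    refine (image_mono ih).trans ?_
    conv_rhs => rw [c.hinv]
    exact subset_iUnion (fun j => c.φ j '' c.E) i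

lemma wordMap_append_image_subset (l m : List (Fin c.N)) :
    wordMap c (l ++ m) '' c.E ⊆ wordMap c l '' c.E := by
  rw [wordMap_append, image_comp]
  exact image_mono (wordMap_image_subset m)

lemma wordMap_image_convexHull_subset (l : List (Fin c.N)) :
    wordMap c l '' convexHull ℝ c.E ⊆ convexHull ℝ c.E := by
  rw [image_subset_iff]
  refine convexHull_min
    (image_subset_iff.1 ((wordMap_image_subset l).trans (subset_convexHull ℝ c.E))) ?_
  intro x hx y hy a b ha hb hab
  rw [mem_preimage, wordMap_smul_add_smul l hab]
  exact convex_convexHull ℝ c.E hx hy ha hb hab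

lemma wordMap_append_image_convexHull_subset (l m : List (Fin c.N)) :
    wordMap c (l ++ m) '' convexHull ℝ c.E ⊆ wordMap c l '' convexHull ℝ c.E := by
  rw [wordMap_append, image_comp]
  exact image_mono (wordMap_image_convexHull_subset m)

lemma dist_le_one_of_mem_convexHull {x y : E2} (hx : x ∈ convexHull ℝ c.E)
    (hy : y ∈ convexHull ℝ c.E) : dist x y ≤ 1 := by
  rw [← c.hdiam, ← convexHull_diam]
  exact dist_le_diam_of_mem (isBounded_convexHull.2 c.hcomp.isBounded) hx hy

lemma dist_le_alphaBar_pow {l : List (Fin c.N)} {x y : E2}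
    (hx : x ∈ wordMap c l '' convexHull ℝ c.E) (hy : y ∈ wordMap c l '' convexHull ℝ c.E) :
    dist x y ≤ alphaBar c ^ l.length := by
  obtain ⟨x, hx, rfl⟩ := hx
  obtain ⟨y, hy, rfl⟩ := hy
  calc dist (wordMap c l x) (wordMap c l y) ≤ prodA1 c l * dist x y := dist_wordMap_le l x y
    _ ≤ alphaBar c ^ l.length * 1 := mul_le_mul (prodA1_le_alphaBar_pow l)
        (dist_le_one_of_mem_convexHull hx hy) dist_nonneg (pow_nonneg alphaBar_pos.le _)
    _ = alphaBar c ^ l.length := mul_one _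

lemma dist_le_prodA2_of_apply_zero_eq {l : List (Fin c.N)} {x y : E2}
    (hx : x ∈ wordMap c l '' convexHull ℝ c.E) (hy : y ∈ wordMap c l '' convexHull ℝ c.E)
    (h : x 0 = y 0) : dist x y ≤ prodA2 c l := by
  obtain ⟨x, hx, rfl⟩ := hx
  obtain ⟨y, hy, rfl⟩ := hy
  calc dist (wordMap c l x) (wordMap c l y) ≤ prodA2 c l * dist x y :=
        dist_wordMap_le_of_apply_zero_eq l h
    _ ≤ prodA2 c l * 1 :=
        mul_le_mul_of_nonneg_left (dist_le_one_of_mem_convexHull hx hy) (prodA2_pos l).le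
    _ = prodA2 c l := mul_one _

lemma continuous_wordMap (l : List (Fin c.N)) : Continuous (wordMap c l) :=
  (LipschitzWith.of_dist_le_mul (K := (prodA1 c l).toNNReal) fun x y => by
    simpa [(prodA1_pos l).le] using dist_wordMap_le l x y).continuous

lemma sscGap_le_dist {i j : Fin c.N} (hij : i ≠ j) {x y : E2}
    (hx : x ∈ c.φ i '' c.E) (hy : y ∈ c.φ j '' c.E) : sscGap c ≤ dist x y :=
  csInf_le ⟨0, by rintro _ ⟨-, -, -, -, -, -, -, rfl⟩; exact dist_nonneg⟩
    ⟨i, j, hij, x, hx, y, hy, rfl⟩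

lemma sscGap_pos : 0 < sscGap c := by
  set S := {d : ℝ | ∃ i j : Fin c.N, i ≠ j ∧
    ∃ x ∈ c.φ i '' c.E, ∃ y ∈ c.φ j '' c.E, d = dist x y}
  have hS : S = ⋃ i, ⋃ j, ⋃ (_ : i ≠ j),
      (fun q : E2 × E2 => dist q.1 q.2) '' ((c.φ i '' c.E) ×ˢ (c.φ j '' c.E)) := by
    ext d; simp [S, eq_comm]
  have hcompact : IsCompact S := by
    rw [hS]
    refine isCompact_iUnion fun i => isCompact_iUnion fun j => isCompact_iUnion fun _ => ?_
    exact ((c.hcomp.image (continuous_wordMap [i])).prod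
      (c.hcomp.image (continuous_wordMap [j]))).image continuous_dist
  obtain ⟨i, j, hij⟩ := exists_pair_ne (Fin c.N)
  obtain ⟨e, he⟩ := c.hne
  have hne : S.Nonempty := ⟨_, i, j, hij, _, mem_image_of_mem _ he, _, mem_image_of_mem _ he, rfl⟩
  obtain ⟨i, j, hij, x, hx, y, hy, hxy⟩ := hcompact.sInf_mem hne
  rw [sscGap, hxy]
  exact dist_pos.2 fun h => disjoint_left.1 (c.hssc i j hij) hx (h ▸ hy)

lemma exists_lt_length_prodA2_take_mul_sscGap_le_dist {l m : List (Fin c.N)}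
    (hlen : l.length = m.length) (hne : l ≠ m) {u v : E2}
    (hu : u ∈ wordMap c l '' c.E) (hv : v ∈ wordMap c m '' c.E) :
    ∃ k < m.length, prodA2 c (m.take k) * sscGap c ≤ dist u v := by
  induction l generalizing m u v with
  | nil => exact absurd (List.length_eq_zero_iff.1 hlen.symm).symm hne
  | cons a l ih =>
    obtain _ | ⟨b, m⟩ := m
    · simp at hlen
    obtain ⟨x, hx, rfl⟩ := hu
    obtain ⟨y, hy, rfl⟩ := hv
    obtain rfl | hab := eq_or_ne a b
    · obtain ⟨k, hk, hsep⟩ := ih (m := m) (by simpa using hlen) (by simpa using hne)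
        (mem_image_of_mem _ hx) (mem_image_of_mem _ hy)
      refine ⟨k + 1, by simpa using hk, ?_⟩
      calc prodA2 c ((a :: m).take (k + 1)) * sscGap c
          = c.a2 a * (prodA2 c (m.take k) * sscGap c) := by simp [mul_assoc]
        _ ≤ c.a2 a * dist (wordMap c l x) (wordMap c m y) := by gcongr; exact (a2_pos a).le
        _ ≤ dist (wordMap c (a :: l) x) (wordMap c (a :: m) y) := by
          simpa using mul_dist_le_dist_wordMap [a] (wordMap c l x) (wordMap c m y)
    · refine ⟨0, by simp, ?_⟩
      simpa using sscGap_le_dist hab (mem_image_of_mem _ (wordMap_image_subset l ⟨x, hx, rfl⟩))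
        (mem_image_of_mem _ (wordMap_image_subset m ⟨y, hy, rfl⟩))

lemma exists_ne_vline_inter_append {a : ℝ} {l : List (Fin c.N)}
    (h : (vline a ∩ wordMap c l '' convexHull ℝ c.E).Nonempty) :
    ∃ k k' : Fin c.N, k ≠ k' ∧
      (vline a ∩ wordMap c (l ++ [k]) '' convexHull ℝ c.E).Nonempty ∧
      (vline a ∩ wordMap c (l ++ [k']) '' convexHull ℝ c.E).Nonempty := by
  obtain ⟨-, hz, w, hw, rfl⟩ := h
  obtain ⟨B, D, hform⟩ := exists_wordMap_apply (c := c) l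
  have hsub : ∀ k : Fin c.N, (vline (w 0) ∩ c.φ k '' convexHull ℝ c.E).Nonempty →
      (vline a ∩ wordMap c (l ++ [k]) '' convexHull ℝ c.E).Nonempty := by
    rintro k ⟨-, hv, x, hx, rfl⟩
    refine ⟨wordMap c l (c.φ k x), ?_, x, hx, by simp [wordMap_append, wordMap]⟩
    show wordMap c l (c.φ k x) 0 = a
    rw [(hform _).1, show c.φ k x 0 = w 0 from hv, ← (hform w).1]
    exact hz
  obtain ⟨k, k', hkk', hk, hk'⟩ := c.hH2 (w 0) ⟨w, rfl, hw⟩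
  exact ⟨k, k', hkk', hsub k hk, hsub k' hk'⟩

lemma exists_vline_inter_append_of_length {a : ℝ} {l : List (Fin c.N)}
    (h : (vline a ∩ wordMap c l '' convexHull ℝ c.E).Nonempty) (m : ℕ) :
    ∃ s : List (Fin c.N), s.length = m ∧
      (vline a ∩ wordMap c (l ++ s) '' convexHull ℝ c.E).Nonempty := by
  induction m generalizing l with
  | zero => exact ⟨[], rfl, by simpa using h⟩
  | succ m ih =>
    obtain ⟨k, -, -, hk, -⟩ := exists_ne_vline_inter_append h
    obtain ⟨s, rfl, hs⟩ := ih hk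
    exact ⟨k :: s, rfl, by simpa using hs⟩

lemma exists_near_vline_inter {a : ℝ} {l : List (Fin c.N)}
    (h : (vline a ∩ wordMap c l '' convexHull ℝ c.E).Nonempty) (m : ℕ) :
    ∃ q ∈ vline a ∩ wordMap c l '' convexHull ℝ c.E, ∃ e ∈ wordMap c l '' c.E,
      dist e q ≤ alphaBar c ^ m := by
  obtain ⟨s, rfl, q, hq0, hq⟩ := exists_vline_inter_append_of_length h m
  obtain ⟨y, hy⟩ := c.hne
  have he : wordMap c (l ++ s) y ∈ wordMap c (l ++ s) '' convexHull ℝ c.E :=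
    mem_image_of_mem _ (subset_convexHull ℝ c.E hy)
  refine ⟨q, ⟨hq0, wordMap_append_image_convexHull_subset l s hq⟩, _,
    wordMap_append_image_subset l s (mem_image_of_mem _ hy), ?_⟩
  calc dist (wordMap c (l ++ s) y) q ≤ alphaBar c ^ (l ++ s).length := dist_le_alphaBar_pow he hq
    _ ≤ alphaBar c ^ s.length := pow_le_pow_of_le_one alphaBar_pos.le alphaBar_lt_one.le (by simp)

@[simp] lemma length_wordPre (i : ℕ → Fin c.N) (n : ℕ) : (wordPre c i n).length = n := by
  simp [wordPre]

lemma wordPre_succ (i : ℕ → Fin c.N) (n : ℕ) : wordPre c i (n + 1) = wordPre c i n ++ [i n] := by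
  simp [wordPre, List.range_succ]

lemma take_wordPre (i : ℕ → Fin c.N) {k n : ℕ} (h : k ≤ n) :
    (wordPre c i n).take k = wordPre c i k := by
  rw [wordPre, ← List.map_take, List.take_range, min_eq_left h, wordPre]

lemma wordPre_append_ne (i : ℕ → Fin c.N) {n : ℕ} {k : Fin c.N} (hk : k ≠ i n) :
    wordPre c i n ++ [k] ≠ wordPre c i (n + 1) := by
  simpa [wordPre_succ] using hk

lemma antitone_prodA2_wordPre (i : ℕ → Fin c.N) : Antitone fun n => prodA2 c (wordPre c i n) :=
  antitone_nat_of_succ_le fun n => by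
    simpa [wordPre_succ] using mul_le_of_le_one_right (prodA2_pos _).le (a2_lt_one (i n)).le

def nSepSet (c : HorizontalCarpet) (i : ℕ → Fin c.N) (p : E2) (t : ℝ) : Set ℕ :=
  {n : ℕ | ∀ l : List (Fin c.N), l.length = n → l ≠ wordPre c i n →
    wordMap c l '' c.E ∩ closedBall p t = ∅}

section Separation

variable {i : ℕ → Fin c.N} {p : E2} {t : ℝ}

lemma lt_dist_of_mem_nSepSet {n : ℕ} (hn : n ∈ nSepSet c i p t) {l : List (Fin c.N)}
    (hl : l.length = n) (hne : l ≠ wordPre c i n) {e : E2} (he : e ∈ wordMap c l '' c.E) :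
    t < dist e p :=
  not_le.1 fun h => (eq_empty_iff_forall_notMem.1 (hn l hl hne)) e ⟨he, mem_closedBall.2 h⟩

variable (hp : ∀ n : ℕ, p ∈ wordMap c (wordPre c i n) '' c.E)
include hp

lemma lt_alphaBar_pow_of_succ_mem_nSepSet {n : ℕ} (hn : n + 1 ∈ nSepSet c i p t) :
    t < alphaBar c ^ n := by
  obtain ⟨k, hk⟩ := exists_ne (i n)
  obtain ⟨y, hy⟩ := c.hne
  have he : wordMap c (wordPre c i n ++ [k]) y ∈ wordMap c (wordPre c i n ++ [k]) '' c.E :=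
    mem_image_of_mem _ hy
  calc t < dist (wordMap c (wordPre c i n ++ [k]) y) p :=
        lt_dist_of_mem_nSepSet hn (by simp) (wordPre_append_ne i hk) he
    _ ≤ alphaBar c ^ (wordPre c i n).length :=
        dist_le_alphaBar_pow (image_mono (subset_convexHull ℝ c.E)
          (wordMap_append_image_subset _ _ he)) (image_mono (subset_convexHull ℝ c.E) (hp n))
    _ = alphaBar c ^ n := by rw [length_wordPre]

lemma le_prodA2_of_succ_mem_nSepSet {n : ℕ} (hn : n + 1 ∈ nSepSet c i p t) :
    t ≤ prodA2 c (wordPre c i n) := by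
  obtain ⟨x, hx, hpx⟩ := hp n
  obtain ⟨k, hk, hline⟩ : ∃ k ≠ i n,
      (vline (p 0) ∩ wordMap c (wordPre c i n ++ [k]) '' convexHull ℝ c.E).Nonempty := by
    obtain ⟨k, k', hkk', hk, hk'⟩ :=
      exists_ne_vline_inter_append ⟨p, rfl, x, subset_convexHull ℝ c.E hx, hpx⟩
    by_cases h : k = i n
    · exact ⟨k', fun h' => hkk' (h.trans h'.symm), hk'⟩
    · exact ⟨k, h, hk⟩
  have hlt : ∀ m : ℕ, t < prodA2 c (wordPre c i n) + alphaBar c ^ m := fun m => by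
    obtain ⟨q, ⟨hq0, hq⟩, e, he, heq⟩ := exists_near_vline_inter hline m
    have hqp : dist q p ≤ prodA2 c (wordPre c i n) :=
      dist_le_prodA2_of_apply_zero_eq (wordMap_append_image_convexHull_subset _ _ hq)
        ⟨x, subset_convexHull ℝ c.E hx, hpx⟩ hq0
    calc t < dist e p := lt_dist_of_mem_nSepSet hn (by simp) (wordPre_append_ne i hk) he
      _ ≤ dist e q + dist q p := dist_triangle e q p
      _ ≤ _ := by linarith
  exact ge_of_tendsto' (tendsto_const_nhds.add
    (tendsto_pow_atTop_nhds_zero_of_lt_one alphaBar_pos.le alphaBar_lt_one)) (fun m => (hlt m).le)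
    |>.trans_eq (add_zero _)

lemma le_nUp_of_mem_nSepSet (ht : 0 < t) {n : ℕ} (hn : n ∈ nSepSet c i p t) : n ≤ nUp c t := by
  obtain _ | n := n
  · exact Nat.zero_le _
  have hUp : alphaBar c ^ nUp c t < t := Nat.sInf_mem (exists_pow_lt_of_lt_one ht alphaBar_lt_one)
  have := hUp.trans (lt_alphaBar_pow_of_succ_mem_nSepSet hp hn)
  exact (pow_lt_pow_iff_right_of_lt_one₀ alphaBar_pos alphaBar_lt_one).1 this

lemma bddAbove_nSepSet (ht : 0 < t) : BddAbove (nSepSet c i p t) :=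
  ⟨nUp c t, fun _ => le_nUp_of_mem_nSepSet hp ht⟩

lemma nSep_mem_nSepSet (ht : 0 < t) : nSep c i p t ∈ nSepSet c i p t :=
  Nat.sSup_mem ⟨0, fun _ hl hne => absurd (List.length_eq_zero_iff.1 hl) hne⟩
    (bddAbove_nSepSet hp ht)

lemma prodA2_wordPre_nSep_mul_sscGap_le (ht : 0 < t) :
    prodA2 c (wordPre c i (nSep c i p t)) * sscGap c ≤ t := by
  have hnot : nSep c i p t + 1 ∉ nSepSet c i p t := fun h =>
    (nSep c i p t).not_succ_le_self (le_csSup (bddAbove_nSepSet hp ht) h)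
  simp only [nSepSet, mem_ofPred_eq, not_forall, ← nonempty_iff_ne_empty] at hnot
  obtain ⟨l, hl, hne, z, hz, hzp⟩ := hnot
  obtain ⟨k, hk, hsep⟩ := exists_lt_length_prodA2_take_mul_sscGap_le_dist
    (hl.trans (length_wordPre i _).symm) hne hz (hp _)
  rw [length_wordPre] at hk
  rw [take_wordPre i hk.le] at hsep
  calc prodA2 c (wordPre c i (nSep c i p t)) * sscGap c ≤ prodA2 c (wordPre c i k) * sscGap c :=
        mul_le_mul_of_nonneg_right (antitone_prodA2_wordPre i (Nat.le_of_lt_succ hk))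
          sscGap_pos.le
    _ ≤ dist z p := hsep
    _ ≤ t := mem_closedBall.1 hzp

lemma alphaLow_mul_le_prodA2_wordPre_nSep (ht0 : 0 < t) (ht1 : t < 1) :
    alphaLow c * t ≤ prodA2 c (wordPre c i (nSep c i p t)) := by
  have hmem := nSep_mem_nSepSet hp ht0
  cases h : nSep c i p t with
  | zero => simpa [wordPre] using mul_le_one₀ alphaLow_lt_one.le ht0.le ht1.le
  | succ n =>
    rw [h] at hmem
    rw [wordPre_succ, prodA2_append, prodA2_cons, prodA2_nil, mul_one, mul_comm (prodA2 c _)]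
    exact mul_le_mul (alphaLow_le_a2 (i n)) (le_prodA2_of_succ_mem_nSepSet hp hmem) ht0.le
      (a2_pos _).le

end Separation

lemma nLow_le_of_alphaLow_pow_mul_le {t : ℝ} {n : ℕ} (h : alphaLow c ^ n * sscGap c ≤ t) :
    nLow c t ≤ n := by
  refine csSup_le' fun m (hm : t < alphaLow c ^ m * sscGap c) => ?_
  by_contra! hnm
  have := pow_le_pow_of_le_one (alphaLow_pos (c := c)).le alphaLow_lt_one.le hnm.le
  linarith [mul_le_mul_of_nonneg_right this (sscGap_pos (c := c)).le]

end HorizontalCarpet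

open HorizontalCarpet

/-- Lemma 5.2 of the paper. -/
theorem statement9 (c : HorizontalCarpet) (i : ℕ → Fin c.N) (p : E2)
    (hp : ∀ n : ℕ, p ∈ wordMap c (wordPre c i n) '' c.E)
    (t : ℝ) (ht0 : 0 < t) (ht1 : t < 1) :
    (nLow c t ≤ nSep c i p t ∧ nSep c i p t ≤ nUp c t) ∧
    (alphaLow c * t ≤ prodA2 c (wordPre c i (nSep c i p t)) ∧
      prodA2 c (wordPre c i (nSep c i p t)) ≤ (sscGap c)⁻¹ * t) := by
  have hgap := prodA2_wordPre_nSep_mul_sscGap_le hp ht0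
  have hlow : alphaLow c ^ nSep c i p t * sscGap c ≤ t :=
    le_trans (mul_le_mul_of_nonneg_right
      (by simpa using alphaLow_pow_le_prodA2 (wordPre c i (nSep c i p t))) sscGap_pos.le) hgap
  refine ⟨⟨nLow_le_of_alphaLow_pow_mul_le hlow,
    le_nUp_of_mem_nSepSet hp ht0 (nSep_mem_nSepSet hp ht0)⟩,
    alphaLow_mul_le_prodA2_wordPre_nSep hp ht0 ht1, ?_⟩
  rw [inv_mul_eq_div, le_div_iff₀ sscGap_pos]
  exact hgap
end
end

section
/- Let C_left and C_right be closed subsets of ℝ with no isolated points, and let w ∈ ℝ. Set T_left = C_left \ C_right, T_right = C_right \ C_left, T = C_left ∩ C_right, and S = T \ cl(T_left ∪ T_right), where cl denotes closure in ℝ. Then: (i) T_left, T_right and S have no isolated points; (ii) if T_left ∪ T_right ≠ ∅, then the set (−∞,w] × T_left ∪ [w,∞) × T_right, equipped with the Euclidean metric of ℝ², is a fibered space whose fibers are the sets (−∞,w] × {y} for y ∈ T_left and [w,∞) × {y} for y ∈ T_right; (iii) if S ≠ ∅, then ℝ × S, with the Euclidean metric, is a fibered space whose fibers are the sets ℝ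 × {y} for y ∈ S; (iv) S ∪ T_left ∪ T_right is dense in C_left ∪ C_right. -/
open Set Metric Filter Topology
open scoped NNReal ENNReal

noncomputable section

/-- The (extended, infimal) distance between two subsets of a metric space. -/
def setEDist {X : Type*} [MetricSpace X] (A B : Set X) : ℝ≥0∞ :=
  ⨅ x ∈ A, EMetric.infEdist x B

/-- Two subsets `F`, `G` are parallel: there is `c > 0` with
`dist(y,F) = dist(x,G) = c` for all `x ∈ F`, `y ∈ G`. -/
def AreParallel {X : Type*} [MetricSpace X] (F G : Set X) : Prop :=
  ∃ c : ℝ, 0 < c ∧ (∀ x ∈ F, Metric.infDist x G = c) ∧ (∀ y ∈ G, Metric.infDist y F = c)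

/-- A subset `F` is geodesic: any two of its points are joined by a path inside `F`
whose length equals their distance. -/
def IsGeodesicSet {X : Type*} [MetricSpace X] (F : Set X) : Prop :=
  ∀ x ∈ F, ∀ y ∈ F, ∃ γ : ℝ → X, ContinuousOn γ (Set.Icc 0 1) ∧
    Set.MapsTo γ (Set.Icc 0 1) F ∧ γ 0 = x ∧ γ 1 = y ∧
    eVariationOn γ (Set.Icc 0 1) = edist x y

/-- A fibered-space structure on the subset `A` of a metric space (with the restriction
metric): a decomposition of `A` into closed fibers satisfying (F1)–(F4). -/
structure FiberedSet {X : Type*} [MetricSpace X] (A : Set X) where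
  ι : Type*
  F : ι → Set X
  subset : ∀ i, F i ⊆ A
  closed : ∀ i, IsClosed (Subtype.val ⁻¹' F i : Set A)
  covers : ⋃ i, F i = A
  /-- (F1) fibers are unbounded geodesic metric spaces -/
  geodesic : ∀ i, IsGeodesicSet (F i)
  unbounded : ∀ i, ¬ Bornology.IsBounded (F i)
  /-- (F2) distinct fibers have positive distance -/
  posDist : ∀ i j, i ≠ j → setEDist (F i) (F j) ≠ 0
  /-- (F3) non-parallel fibers diverge -/
  diverge : ∀ i j, i ≠ j → ¬ AreParallel (F i) (F j) →
    EMetric.hausdorffEdist (F i) (F j) = ⊤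
  /-- (F4) parallel fibers are not isolated -/
  notIsolated : ∀ i, ∃ seq : ℕ → ι, (∀ n, AreParallel (F (seq n)) (F i)) ∧
    Tendsto (fun n => setEDist (F (seq n)) (F i)) atTop (𝓝 0)

/-- `f` is (C,η)-quasisymmetric: η-quasisymmetric and there are points `p ≠ w` with
`C⁻¹ ≤ ρ(f p, f w)/d(p,w) ≤ C`. -/
def IsCQuasisymmetric {X Y : Type*} [MetricSpace X] [MetricSpace Y] (C : ℝ) (η : ℝ → ℝ)
    (f : X → Y) : Prop :=
  IsQuasisymmetric η f ∧ ∃ p w : X, p ≠ w ∧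
    C⁻¹ ≤ dist (f p) (f w) / dist p w ∧ dist (f p) (f w) / dist p w ≤ C
/-- A set has no isolated points. -/
def NoIsolated (A : Set ℝ) : Prop := ∀ x ∈ A, x ∈ closure (A \ {x})

/-!
All the fibers are horizontal pieces `I × {y}` of the plane. A point of `I × {y}` lies at
distance exactly `|y - y'|` from `I × {y'}`, so fibers with the same extent `I` are parallel,
fibers at distinct heights are at positive distance, and fibers over a height `y` that is not
isolated accumulate on the fiber over `y`. Fibers with different extents (a left and a right
ray) have infinite Hausdorff distance because their first coordinates already do. Part (i)
holds because `T_left`, `T_right` and `S` are traces of `C_left` or `C_right` on open sets,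
and (iv) because a point of `T` lies either in `S` or in the closure of `T_left ∪ T_right`.
-/

theorem Convex.isGeodesicSet {E : Type*} [NormedAddCommGroup E] [NormedSpace ℝ E] {s : Set E}
    (hs : Convex ℝ s) : IsGeodesicSet s := by
  intro x hx y hy
  have hlip : LipschitzWith (nndist x y) (AffineMap.lineMap x y : ℝ → E) :=
    LipschitzWith.of_dist_le_mul fun a b => by rw [dist_lineMap_lineMap, mul_comm, coe_nndist]
  refine ⟨AffineMap.lineMap x y, AffineMap.lineMap_continuous.continuousOn,
    fun t ht => hs.lineMap_mem hx hy ht, AffineMap.lineMap_apply_zero _ _,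
    AffineMap.lineMap_apply_one _ _, le_antisymm ?_ ?_⟩
  · calc eVariationOn (AffineMap.lineMap x y) (Icc (0 : ℝ) 1)
        ≤ nndist x y * eVariationOn id (Icc (0 : ℝ) 1) :=
          (hlip.lipschitzOnWith (s := univ)).comp_eVariationOn_le (mapsTo_univ _ _)
      _ = edist x y := by
        rw [eVariationOn_id_Icc, sub_zero, ENNReal.ofReal_one, mul_one, edist_nndist]
  · simpa using eVariationOn.edist_le (AffineMap.lineMap x y)
      (left_mem_Icc.2 (zero_le_one' ℝ)) (right_mem_Icc.2 (zero_le_one' ℝ))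

theorem NoIsolated.inter_isOpen {A U : Set ℝ} (hA : NoIsolated A) (hU : IsOpen U) :
    NoIsolated (A ∩ U) := fun x hx => by
  have := hU.inter_closure ⟨hx.2, hA x hx.1⟩
  rwa [← inter_sdiff_assoc, inter_comm] at this

theorem inter_sdiff_closure_symmDiff {X : Type*} [TopologicalSpace X] (A B : Set X) :
    (A ∩ B) \ closure (A \ B ∪ B \ A) = A \ closure (A \ B ∪ B \ A) := by
  refine Subset.antisymm (fun x hx => ⟨hx.1.1, hx.2⟩) fun x hx => ⟨⟨hx.1, ?_⟩, hx.2⟩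
  by_contra hxB
  exact hx.2 (subset_closure (Or.inl ⟨hx.1, hxB⟩))

theorem union_subset_closure_symmDiff_union {X : Type*} [TopologicalSpace X] (A B : Set X) :
    A ∪ B ⊆ closure ((A ∩ B) \ closure (A \ B ∪ B \ A) ∪ A \ B ∪ B \ A) := by
  intro x hx
  by_cases hD : x ∈ closure (A \ B ∪ B \ A)
  · exact closure_mono (fun z hz => by rw [union_assoc]; exact Or.inr hz) hD
  · apply subset_closure
    by_cases hA : x ∈ A <;> by_cases hB : x ∈ B <;> simp_all

theorem Real.hausdorffEDist_Iic_Ici (a b : ℝ) : hausdorffEDist (Iic a) (Ici b) = ⊤ := by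
  refine ENNReal.eq_top_of_forall_nnreal_le fun r => ?_
  calc (r : ℝ≥0∞) ≤ infEDist (min a b - r) (Ici b) := le_infEDist.2 fun z hz => by
        rw [edist_dist, ← ENNReal.ofReal_coe_nnreal, Real.dist_eq, abs_sub_comm]
        refine ENNReal.ofReal_le_ofReal ?_
        linarith [le_abs_self (z - (min a b - r)), min_le_right a b, mem_Ici.1 hz]
    _ ≤ hausdorffEDist (Iic a) (Ici b) := infEDist_le_hausdorffEDist_of_mem (by simp)

theorem Real.not_isBounded_Iic (a : ℝ) : ¬ Bornology.IsBounded (Iic a) :=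
  fun h => not_bddBelow_Iic a h.bddBelow

theorem Real.not_isBounded_Ici (a : ℝ) : ¬ Bornology.IsBounded (Ici a) :=
  fun h => not_bddAbove_Ici a h.bddAbove

def horizontalFiber (I : Set ℝ) (y : ℝ) : Set E2 := {x | x 0 ∈ I ∧ x 1 = y}

section horizontalFiber

variable {I J : Set ℝ} {x : E2} {y y' : ℝ}

theorem isClosed_horizontalFiber (hI : IsClosed I) (y : ℝ) : IsClosed (horizontalFiber I y) :=
  (hI.preimage (by fun_prop)).inter (isClosed_eq (by fun_prop) continuous_const)

theorem convex_horizontalFiber (hI : Convex ℝ I) (y : ℝ) : Convex ℝ (horizontalFiber I y) :=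
  (hI.is_linear_preimage (EuclideanSpace.proj (0 : Fin 2)).isLinear).inter
    ((convex_singleton y).is_linear_preimage (EuclideanSpace.proj (1 : Fin 2)).isLinear)

theorem not_isBounded_horizontalFiber (hI : ¬ Bornology.IsBounded I) (y : ℝ) :
    ¬ Bornology.IsBounded (horizontalFiber I y) := fun hb =>
  hI <| ((EuclideanSpace.proj (0 : Fin 2) : E2 →L[ℝ] ℝ).lipschitz.isBounded_image hb).subset
    fun a ha => ⟨!₂[a, y], ⟨ha, rfl⟩, rfl⟩

theorem infEDist_apply_le_of_mapsTo {s : Set E2} {t : Set ℝ} {i : Fin 2}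
    (h : MapsTo (fun p : E2 => p i) s t) (x : E2) : infEDist (x i) t ≤ infEDist x s :=
  le_infEDist.2 fun p hp => (infEDist_le_edist_of_mem (h hp)).trans (PiLp.edist_apply_le x p i)

theorem edist_le_infEDist_horizontalFiber (hx : x ∈ horizontalFiber I y) :
    edist y y' ≤ infEDist x (horizontalFiber J y') := by
  simpa [hx.2] using infEDist_apply_le_of_mapsTo (s := horizontalFiber J y') (t := {y'}) (i := 1)
    (fun p hp => hp.2) x

theorem infEDist_horizontalFiber (hx : x ∈ horizontalFiber I y) (y' : ℝ) :
    infEDist x (horizontalFiber I y') = edist y y' := by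
  apply le_antisymm
  · have hmem : (x + EuclideanSpace.single 1 (y' - y) : E2) ∈ horizontalFiber I y' := by
      refine ⟨by simpa using hx.1, by simp [hx.2]⟩
    refine (infEDist_le_edist_of_mem hmem).trans_eq ?_
    simp [edist_dist, dist_self_add_right, Real.dist_eq, abs_sub_comm]
  · exact edist_le_infEDist_horizontalFiber hx

theorem areParallel_horizontalFiber (h : y ≠ y') :
    AreParallel (horizontalFiber I y) (horizontalFiber I y') := by
  refine ⟨dist y y', dist_pos.2 h, fun x hx => ?_, fun x hx => ?_⟩
  · simp [infDist, infEDist_horizontalFiber hx, edist_dist]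
  · simp [infDist, infEDist_horizontalFiber hx, edist_dist, dist_comm]

theorem edist_le_setEDist_horizontalFiber :
    edist y y' ≤ setEDist (horizontalFiber I y) (horizontalFiber J y') :=
  le_iInf₂ fun _ hx => edist_le_infEDist_horizontalFiber hx

theorem setEDist_horizontalFiber_le (hI : I.Nonempty) :
    setEDist (horizontalFiber I y) (horizontalFiber I y') ≤ edist y y' := by
  obtain ⟨a, ha⟩ := hI
  exact (iInf₂_le (!₂[a, y]) ⟨ha, rfl⟩).trans_eq (infEDist_horizontalFiber ⟨ha, rfl⟩ y')

theorem hausdorffEDist_le_hausdorffEDist_horizontalFiber :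
    hausdorffEDist I J ≤ hausdorffEDist (horizontalFiber I y) (horizontalFiber J y') := by
  refine hausdorffEDist_le_of_infEDist (fun a ha => ?_) (fun b hb => ?_)
  · exact (infEDist_apply_le_of_mapsTo (i := 0) (fun p hp => hp.1) !₂[a, y]).trans
      (infEDist_le_hausdorffEDist_of_mem ⟨ha, rfl⟩)
  · rw [hausdorffEDist_comm]
    exact (infEDist_apply_le_of_mapsTo (i := 0) (fun p hp => hp.1) !₂[b, y']).trans
      (infEDist_le_hausdorffEDist_of_mem ⟨hb, rfl⟩)

end horizontalFiber

theorem tendsto_setEDist_horizontalFiber {I : Set ℝ} (hI : I.Nonempty) {u : ℕ → ℝ} {y : ℝ}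
    (hu : Tendsto u atTop (𝓝 y)) :
    Tendsto (fun n => setEDist (horizontalFiber I (u n)) (horizontalFiber I y)) atTop (𝓝 0) :=
  tendsto_of_tendsto_of_tendsto_of_le_of_le tendsto_const_nhds (tendsto_iff_edist_tendsto_0.1 hu)
    (fun _ => zero_le) (fun _ => setEDist_horizontalFiber_le hI)

theorem exists_fiberedSet_horizontalFiber {Y : Set ℝ} {I : ℝ → Set ℝ} {A : Set E2}
    {T : Set (Set E2)} (hA : ∀ x, x ∈ A ↔ x 1 ∈ Y ∧ x 0 ∈ I (x 1))
    (hT : ∀ s, s ∈ T ↔ ∃ y ∈ Y, s = horizontalFiber (I y) y)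
    (hclosed : ∀ y ∈ Y, IsClosed (I y)) (hconvex : ∀ y ∈ Y, Convex ℝ (I y))
    (hunbdd : ∀ y ∈ Y, ¬ Bornology.IsBounded (I y))
    (hdiverge : ∀ y ∈ Y, ∀ y' ∈ Y, I y ≠ I y' → hausdorffEDist (I y) (I y') = ⊤)
    (hacc : ∀ y ∈ Y, y ∈ closure ({y' ∈ Y | I y' = I y} \ {y})) :
    ∃ FS : FiberedSet A, range FS.F = T := by
  have hne : ∀ i j : ULift Y, i ≠ j → (i.down : ℝ) ≠ j.down := fun i j hij h =>
    hij (ULift.ext _ _ (Subtype.ext h))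
  refine ⟨⟨ULift Y, fun i => horizontalFiber (I i.down) i.down, ?subset, ?closed, ?covers,
    fun i => (convex_horizontalFiber (hconvex _ i.down.2) _).isGeodesicSet,
    fun i => not_isBounded_horizontalFiber (hunbdd _ i.down.2) _, ?posDist, ?diverge,
    ?notIsolated⟩, ?range⟩
  case subset => rintro ⟨y, hy⟩ x ⟨hx, rfl⟩; exact (hA x).2 ⟨hy, hx⟩
  case closed => exact fun i =>
    (isClosed_horizontalFiber (hclosed _ i.down.2) _).preimage continuous_subtype_val
  case covers =>
    ext x
    simp only [mem_iUnion, hA]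
    refine ⟨?_, fun hx => ⟨⟨x 1, hx.1⟩, hx.2, rfl⟩⟩
    rintro ⟨⟨y, hy⟩, hx, hxy⟩
    exact ⟨hxy ▸ hy, hxy ▸ hx⟩
  case posDist =>
    refine fun i j hij h0 => hne i j hij ?_
    simpa [h0] using edist_le_setEDist_horizontalFiber (y := i.down) (y' := j.down)
      (I := I i.down) (J := I j.down)
  case diverge =>
    intro i j hij hnp
    by_cases hI : I i.down = I j.down
    · exact absurd (hI ▸ areParallel_horizontalFiber (hne i j hij)) hnp
    · exact top_le_iff.1 <| (hdiverge _ i.down.2 _ j.down.2 hI).symm.le.trans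
        hausdorffEDist_le_hausdorffEDist_horizontalFiber
  case notIsolated =>
    rintro ⟨y, hy⟩
    obtain ⟨u, hu, hlim⟩ := mem_closure_iff_seq_limit.1 (hacc y hy)
    refine ⟨fun n => ⟨u n, (hu n).1.1⟩, fun n => ?_, ?_⟩
    · simpa [(hu n).1.2] using areParallel_horizontalFiber (I := I y) (hu n).2
    · simpa [fun n => (hu n).1.2] using
        tendsto_setEDist_horizontalFiber (Bornology.nonempty_of_not_isBounded (hunbdd y hy)) hlim
  case range =>
    ext s
    rw [hT]
    exact ⟨fun ⟨i, hi⟩ => ⟨i.down, i.down.2, hi.symm⟩, fun ⟨y, hy, hs⟩ => ⟨⟨y, hy⟩, hs.symm⟩⟩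

theorem exists_fiberedSet_lines {S : Set ℝ} (hS : NoIsolated S) :
    ∃ FS : FiberedSet {x : E2 | x 1 ∈ S},
      range FS.F = {s : Set E2 | ∃ y ∈ S, s = {x : E2 | x 1 = y}} :=
  exists_fiberedSet_horizontalFiber (Y := S) (I := fun _ => univ) (by simp)
    (by simp [horizontalFiber]) (fun _ _ => isClosed_univ) (fun _ _ => convex_univ)
    (fun _ _ h => Real.not_isBounded_Ici 0 (h.subset (subset_univ _)))
    (fun _ _ _ _ h => absurd rfl h) (fun y hy => by simpa using hS y hy)

theorem exists_fiberedSet_rays {L R : Set ℝ} (hLR : Disjoint L R) (hL : NoIsolated L)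
    (hR : NoIsolated R) (w : ℝ) :
    ∃ FS : FiberedSet ({x : E2 | x 0 ≤ w ∧ x 1 ∈ L} ∪ {x : E2 | w ≤ x 0 ∧ x 1 ∈ R}),
      range FS.F = {s : Set E2 | (∃ y ∈ L, s = {x : E2 | x 0 ≤ w ∧ x 1 = y}) ∨
        (∃ y ∈ R, s = {x : E2 | w ≤ x 0 ∧ x 1 = y})} := by
  classical
  have hRL : ∀ y ∈ R, y ∉ L := fun y hy hyL => hLR.notMem_of_mem_left hyL hy
  refine exists_fiberedSet_horizontalFiber (Y := L ∪ R)
    (I := fun y => if y ∈ L then Iic w else Ici w) (fun x => ?_) (fun s => ?_)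
    (fun y _ => ?_) (fun y _ => ?_) (fun y _ => ?_) (fun y _ y' _ hne => ?_) (fun y hy => ?_)
  · split_ifs with h
    · simp [h, hLR.notMem_of_mem_left h]
    · simp [h, and_comm]
  · simp only [mem_ofPred_eq, mem_union]
    constructor
    · rintro (⟨y, hy, rfl⟩ | ⟨y, hy, rfl⟩)
      · exact ⟨y, Or.inl hy, by rw [if_pos hy]; rfl⟩
      · exact ⟨y, Or.inr hy, by rw [if_neg (hRL y hy)]; rfl⟩
    · rintro ⟨y, hy | hy, rfl⟩
      · exact Or.inl ⟨y, hy, by rw [if_pos hy]; rfl⟩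
      · exact Or.inr ⟨y, hy, by rw [if_neg (hRL y hy)]; rfl⟩
  · split_ifs; exacts [isClosed_Iic, isClosed_Ici]
  · split_ifs; exacts [convex_Iic w, convex_Ici w]
  · split_ifs; exacts [Real.not_isBounded_Iic w, Real.not_isBounded_Ici w]
  · split_ifs at hne ⊢
    exacts [absurd rfl hne, Real.hausdorffEDist_Iic_Ici w w,
      hausdorffEDist_comm.trans (Real.hausdorffEDist_Iic_Ici w w), absurd rfl hne]
  · rcases hy with hy | hy
    · refine closure_mono (sdiff_subset_sdiff_left fun z hz => ?_) (hL y hy)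
      simp [hz, hy]
    · refine closure_mono (sdiff_subset_sdiff_left fun z hz => ?_) (hR y hy)
      simp [hz, hRL z hz, hRL y hy]

/-- Properties of the decomposition used in the proof of Theorem A: given closed sets
`C_left`, `C_right` in ℝ without isolated points and `w ∈ ℝ`, the sets
`T_left = C_left \ C_right`, `T_right = C_right \ C_left`, `T = C_left ∩ C_right` and
`S = T \ cl(T_left ∪ T_right)` satisfy: (i) `T_left`, `T_right`, `S` have no isolated
points; (ii) `(-∞,w] × T_left ∪ [w,∞) × T_right` is a fibered space with the obvious
fibers; (iii) `ℝ × S` is a fibered space with fibers `ℝ × {y}`; (iv) `S ∪ T_left ∪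
T_right` is dense in `C_left ∪ C_right`. -/
theorem statement17 (Cl Cr : Set ℝ) (hClc : IsClosed Cl) (hCrc : IsClosed Cr)
    (hClni : NoIsolated Cl) (hCrni : NoIsolated Cr) (w : ℝ) :
    NoIsolated (Cl \ Cr) ∧ NoIsolated (Cr \ Cl) ∧
    NoIsolated ((Cl ∩ Cr) \ closure ((Cl \ Cr) ∪ (Cr \ Cl))) ∧
    (((Cl \ Cr) ∪ (Cr \ Cl)).Nonempty →
      ∃ FS : FiberedSet ({x : E2 | x 0 ≤ w ∧ x 1 ∈ Cl \ Cr} ∪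
          {x : E2 | w ≤ x 0 ∧ x 1 ∈ Cr \ Cl}),
        Set.range FS.F =
          {s : Set E2 | (∃ y ∈ Cl \ Cr, s = {x : E2 | x 0 ≤ w ∧ x 1 = y}) ∨
            (∃ y ∈ Cr \ Cl, s = {x : E2 | w ≤ x 0 ∧ x 1 = y})}) ∧
    (((Cl ∩ Cr) \ closure ((Cl \ Cr) ∪ (Cr \ Cl))).Nonempty →
      ∃ FS : FiberedSet {x : E2 | x 1 ∈ (Cl ∩ Cr) \ closure ((Cl \ Cr) ∪ (Cr \ Cl))},
        Set.range FS.F =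
          {s : Set E2 | ∃ y ∈ (Cl ∩ Cr) \ closure ((Cl \ Cr) ∪ (Cr \ Cl)),
            s = {x : E2 | x 1 = y}}) ∧
    (Cl ∪ Cr ⊆ closure (((Cl ∩ Cr) \ closure ((Cl \ Cr) ∪ (Cr \ Cl))) ∪
      (Cl \ Cr) ∪ (Cr \ Cl))) := by
  have hTl : NoIsolated (Cl \ Cr) := hClni.inter_isOpen hCrc.isOpen_compl
  have hTr : NoIsolated (Cr \ Cl) := hCrni.inter_isOpen hClc.isOpen_compl
  have hS : NoIsolated ((Cl ∩ Cr) \ closure ((Cl \ Cr) ∪ (Cr \ Cl))) := by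
    rw [inter_sdiff_closure_symmDiff]
    exact hClni.inter_isOpen isClosed_closure.isOpen_compl
  exact ⟨hTl, hTr, hS, fun _ => exists_fiberedSet_rays disjoint_sdiff_sdiff hTl hTr w,
    fun _ => exists_fiberedSet_lines hS, union_subset_closure_symmDiff_union Cl Cr⟩
end
end
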